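/- arXiv:1604.01237 — 9 statements merged into one kernel-verified Lean document; each statement's English description precedes it below -/
import Mathlib

section
/- Let E be a real inner product space, let c < 0, let w ∈ E with ‖w‖ = 1, let e ∈ E and λ ∈ ℝ. Then the curve X : ℝ → E defined by X(t) = f_λ(t)·e + ⟨e,w⟩·g_λ(t)·w satisfies X(0) = e, X'(0) = -λ·e, and the Jacobi equation of the complex space form of holomorphic sectional curvature c along a normal geodesic in parallel coordinates: 4·X''(t) + c·X(t) + 3c·⟨X(t),w⟩·w = 0 for all t ∈ ℝ. -/
open Real RealInnerProductSpace

/-- In a real inner product space `E`, for `c < 0`, a unit vector `w`,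
`e ∈ E` and `λ ∈ ℝ`, the curve `X t = f_λ(t) • e + ⟨e,w⟩ g_λ(t) • w` (with `f_λ, g_λ` the
hyperbolic Jacobi-field coefficient functions of the complex space form of holomorphic
sectional curvature `c`) satisfies `X 0 = e`, `X' 0 = -λ • e`, and the Jacobi equation
`4 X'' + c X + 3c ⟨X, w⟫ w = 0`. -/
theorem stmt_0 {E : Type*} [NormedAddCommGroup E] [InnerProductSpace ℝ E]
    (c : ℝ) (hc : c < 0) (w : E) (hw : ‖w‖ = 1) (e : E) (lam : ℝ)
    (f g : ℝ → ℝ)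
    (hf : ∀ t, f t = Real.cosh (t * Real.sqrt (-c) / 2)
        - (2 * lam / Real.sqrt (-c)) * Real.sinh (t * Real.sqrt (-c) / 2))
    (hg : ∀ t, g t = (Real.cosh (t * Real.sqrt (-c) / 2) - 1)
        * (1 + 2 * Real.cosh (t * Real.sqrt (-c) / 2)
          - (2 * lam / Real.sqrt (-c)) * Real.sinh (t * Real.sqrt (-c) / 2)))
    (X : ℝ → E)
    (hX : ∀ t, X t = f t • e + (⟪e, w⟫ * g t) • w) :
    X 0 = e ∧ deriv X 0 = (-lam) • e ∧
      ∀ t : ℝ, (4 : ℝ) • deriv (deriv X) t + c • X t + (3 * c * ⟪X t, w⟫) • w = 0 := by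
  have hcpos : (0:ℝ) < -c := by linarith
  set q := Real.sqrt (-c) with hqdef
  have hqpos : 0 < q := Real.sqrt_pos.mpr hcpos
  have hq2 : q ^ 2 = -c := Real.sq_sqrt hcpos.le
  set a : ℝ := 2 * lam / q with hadef
  set ip : ℝ := ⟪e, w⟫ with hipdef
  -- abbreviations
  set C : ℝ → ℝ := fun t => Real.cosh (t * q / 2) with hCdef
  set S : ℝ → ℝ := fun t => Real.sinh (t * q / 2) with hSdef
  have hCS : ∀ t, C t ^ 2 - S t ^ 2 = 1 := fun t => Real.cosh_sq_sub_sinh_sq _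
  have hu : ∀ t : ℝ, HasDerivAt (fun t : ℝ => t * q / 2) (q / 2) t := by
    intro t
    simpa using ((hasDerivAt_id t).mul_const q).div_const 2
  have hCd : ∀ t, HasDerivAt C ((q / 2) * S t) t := by
    intro t
    exact ((Real.hasDerivAt_cosh (t * q / 2)).comp t (hu t)).congr_deriv (mul_comm _ _)
  have hSd : ∀ t, HasDerivAt S ((q / 2) * C t) t := by
    intro t
    exact ((Real.hasDerivAt_sinh (t * q / 2)).comp t (hu t)).congr_deriv (mul_comm _ _)
  -- first and second derivatives of f and g
  set f1 : ℝ → ℝ := fun t => (q / 2) * S t - a * ((q / 2) * C t) with hf1def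
  set f2 : ℝ → ℝ := fun t => (q / 2) * ((q / 2) * C t) - a * ((q / 2) * ((q / 2) * S t)) with hf2def
  set g1 : ℝ → ℝ := fun t =>
    ((q / 2) * S t) * (1 + 2 * C t - a * S t)
      + (C t - 1) * (2 * ((q / 2) * S t) - a * ((q / 2) * C t)) with hg1def
  set g2 : ℝ → ℝ := fun t =>
    ((q / 2) * ((q / 2) * C t)) * (1 + 2 * C t - a * S t)
      + 2 * (((q / 2) * S t) * (2 * ((q / 2) * S t) - a * ((q / 2) * C t)))
      + (C t - 1) * (2 * ((q / 2) * ((q / 2) * C t)) - a * ((q / 2) * ((q / 2) * S t)))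
      with hg2def
  have hfe : f = fun t => C t - a * S t := funext hf
  have hge : g = fun t => (C t - 1) * (1 + 2 * C t - a * S t) := funext hg
  have hfd : ∀ t, HasDerivAt f (f1 t) t := by
    intro t; rw [hfe]
    exact (hCd t).sub ((hSd t).const_mul a)
  have hf1d : ∀ t, HasDerivAt f1 (f2 t) t := by
    intro t
    exact ((hSd t).const_mul (q / 2)).sub (((hCd t).const_mul (q / 2)).const_mul a)
  have hQd : ∀ t, HasDerivAt (fun t => 1 + 2 * C t - a * S t)
      (2 * ((q / 2) * S t) - a * ((q / 2) * C t)) t := by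
    intro t
    exact (((hasDerivAt_const t (1:ℝ)).add ((hCd t).const_mul 2)).sub ((hSd t).const_mul a)).congr_deriv (by ring)
  have hgd : ∀ t, HasDerivAt g (g1 t) t := by
    intro t; rw [hge]
    exact ((hCd t).sub_const 1).mul (hQd t)
  have hg1d : ∀ t, HasDerivAt g1 (g2 t) t := by
    intro t
    have h1 : HasDerivAt (fun t => ((q / 2) * S t) * (1 + 2 * C t - a * S t))
        (((q / 2) * ((q / 2) * C t)) * (1 + 2 * C t - a * S t)
          + ((q / 2) * S t) * (2 * ((q / 2) * S t) - a * ((q / 2) * C t))) t :=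
      ((hSd t).const_mul (q / 2)).mul (hQd t)
    have h2 : HasDerivAt (fun t => (C t - 1) * (2 * ((q / 2) * S t) - a * ((q / 2) * C t)))
        (((q / 2) * S t) * (2 * ((q / 2) * S t) - a * ((q / 2) * C t))
          + (C t - 1) * (2 * ((q / 2) * ((q / 2) * C t)) - a * ((q / 2) * ((q / 2) * S t)))) t := by
      exact ((hCd t).sub_const 1).mul
        (((hSd t).const_mul (q / 2)).const_mul 2 |>.sub (((hCd t).const_mul (q / 2)).const_mul a))
    have := h1.add h2
    exact this.congr_deriv (by simp only [hg2def]; ring)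
  -- derivatives of X
  have hXd : ∀ t, HasDerivAt X (f1 t • e + (ip * g1 t) • w) t := by
    intro t
    have := ((hfd t).smul_const e).add (((hgd t).const_mul ip).smul_const w)
    have hXe : X = fun t => f t • e + (ip * g t) • w := funext hX
    rw [hXe]; exact this
  have hX1d : ∀ t, HasDerivAt (fun t => f1 t • e + (ip * g1 t) • w)
      (f2 t • e + (ip * g2 t) • w) t := by
    intro t
    exact ((hf1d t).smul_const e).add (((hg1d t).const_mul ip).smul_const w)
  have hderivX : deriv X = fun t => f1 t • e + (ip * g1 t) • w :=
    funext fun t => (hXd t).deriv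
  have hderiv2X : ∀ t, deriv (deriv X) t = f2 t • e + (ip * g2 t) • w := by
    intro t
    rw [hderivX]
    exact (hX1d t).deriv
  refine ⟨?_, ?_, ?_⟩
  · rw [hX 0, hf 0, hg 0]
    simp
  · rw [hderivX]
    have hC0 : C 0 = 1 := by simp [hCdef]
    have hS0 : S 0 = 0 := by simp [hSdef]
    have : f1 0 = -lam := by
      simp only [hf1def, hC0, hS0, hadef]
      field_simp
      ring
    have hg10 : g1 0 = 0 := by simp [hg1def, hC0, hS0]
    simp [this, hg10]
  · intro t
    rw [hderiv2X t, hX t]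
    have hXw : ⟪f t • e + (ip * g t) • w, w⟫ = ip * (f t + g t) := by
      rw [inner_add_left, real_inner_smul_left, real_inner_smul_left,
        real_inner_self_eq_norm_sq, hw, ← hipdef]
      ring
    rw [hXw]
    have key1 : 4 * f2 t + c * f t = 0 := by
      have := hCS t
      simp only [hf2def, hfe]
      linear_combination (C t - a * S t) * hq2
    have key2 : ip * (4 * g2 t) + c * (ip * g t) + 3 * c * (ip * (f t + g t)) = 0 := by
      have h1 := hCS t
      have hc' : c = -q ^ 2 := by linarith
      have : 4 * g2 t + c * g t + 3 * c * (f t + g t) = 0 := by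
        simp only [hg2def, hge, hfe, hc']
        linear_combination (-4 * q ^ 2) * hCS t
      linear_combination ip * this
    have expand : (4:ℝ) • (f2 t • e + (ip * g2 t) • w) + c • (f t • e + (ip * g t) • w)
        + (3 * c * (ip * (f t + g t))) • w
        = (4 * f2 t + c * f t) • e
          + (ip * (4 * g2 t) + c * (ip * g t) + 3 * c * (ip * (f t + g t))) • w := by
      module
    rw [expand, key1, key2]
    simp
end

section
/- Let E be a real inner product space, let c > 0, let w ∈ E with ‖w‖ = 1, let e ∈ E and λ ∈ ℝ. Then the curve X : ℝ → E defined by X(t) = f_λ(t)·e + ⟨e,w⟩·g_λ(t)·w satisfies X(0) = e, X'(0) = -λ·e, and the Jacobi equation of the complex space form of holomorphic sectional curvature c along a normal geodesic in parallel coordinates: 4·X''(t) + c·X(t) + 3c·⟨X(t),w⟩·w = 0 for all t ∈ ℝ. -/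
open Real RealInnerProductSpace

/-- In a real inner product space `E`, for `c > 0`, a unit vector `w`,
`e ∈ E` and `λ ∈ ℝ`, the curve `X t = f_λ(t) • e + ⟨e,w⟩ g_λ(t) • w` (with `f_λ, g_λ` the
trigonometric Jacobi-field coefficient functions of the complex space form of holomorphic
sectional curvature `c`) satisfies `X 0 = e`, `X' 0 = -λ • e`, and the Jacobi equation
`4 X'' + c X + 3c ⟨X, w⟩ w = 0`. -/
theorem stmt_1 {E : Type*} [NormedAddCommGroup E] [InnerProductSpace ℝ E]
    (c : ℝ) (hc : 0 < c) (w : E) (hw : ‖w‖ = 1) (e : E) (lam : ℝ)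
    (f g : ℝ → ℝ)
    (hf : ∀ t, f t = Real.cos (t * Real.sqrt c / 2)
        - (2 * lam / Real.sqrt c) * Real.sin (t * Real.sqrt c / 2))
    (hg : ∀ t, g t = (Real.cos (t * Real.sqrt c / 2) - 1)
        * (1 + 2 * Real.cos (t * Real.sqrt c / 2)
          - (2 * lam / Real.sqrt c) * Real.sin (t * Real.sqrt c / 2)))
    (X : ℝ → E)
    (hX : ∀ t, X t = f t • e + (⟪e, w⟫ * g t) • w) :
    X 0 = e ∧ deriv X 0 = (-lam) • e ∧
      ∀ t : ℝ, (4 : ℝ) • deriv (deriv X) t + c • X t + (3 * c * ⟪X t, w⟫) • w = 0 := by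
  set s := Real.sqrt c with hsdef
  have hs : 0 < s := Real.sqrt_pos.mpr hc
  have hs2 : s ^ 2 = c := Real.sq_sqrt hc.le
  set k : ℝ := 2 * lam / s with hkdef
  set A : ℝ := ⟪e, w⟫ with hA
  -- auxiliary function h with g = -f + h
  set h : ℝ → ℝ := fun t => Real.cos (t * s) - (k / 2) * Real.sin (t * s) with hhdef
  have hgh : ∀ t, g t = -f t + h t := by
    intro t
    rw [hg, hf, hhdef]
    have h2 : t * s = 2 * (t * s / 2) := by ring
    simp only []
    rw [h2, Real.cos_two_mul, Real.sin_two_mul]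
    ring
  -- basic derivative facts
  have hu : ∀ t : ℝ, HasDerivAt (fun x : ℝ => x * s / 2) (s / 2) t := by
    intro t
    have := ((hasDerivAt_id t).mul_const s).div_const 2
    simpa using this
  have hu2 : ∀ t : ℝ, HasDerivAt (fun x : ℝ => x * s) s t := by
    intro t
    simpa using (hasDerivAt_id t).mul_const s
  have hcos : ∀ t : ℝ, HasDerivAt (fun x : ℝ => Real.cos (x * s / 2))
      (-Real.sin (t * s / 2) * (s / 2)) t := fun t =>
    by have := (Real.hasDerivAt_cos (t * s / 2)).comp t (hu t); exact this
  have hsin : ∀ t : ℝ, HasDerivAt (fun x : ℝ => Real.sin (x * s / 2))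
      (Real.cos (t * s / 2) * (s / 2)) t := fun t =>
    by have := (Real.hasDerivAt_sin (t * s / 2)).comp t (hu t); exact this
  have hcos2 : ∀ t : ℝ, HasDerivAt (fun x : ℝ => Real.cos (x * s))
      (-Real.sin (t * s) * s) t := fun t =>
    by have := (Real.hasDerivAt_cos (t * s)).comp t (hu2 t); exact this
  have hsin2 : ∀ t : ℝ, HasDerivAt (fun x : ℝ => Real.sin (x * s))
      (Real.cos (t * s) * s) t := fun t =>
    by have := (Real.hasDerivAt_sin (t * s)).comp t (hu2 t); exact this
  -- first derivatives
  set f1 : ℝ → ℝ := fun t => -Real.sin (t * s / 2) * (s / 2)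
      - k * (Real.cos (t * s / 2) * (s / 2)) with hf1
  set h1 : ℝ → ℝ := fun t => -Real.sin (t * s) * s
      - k / 2 * (Real.cos (t * s) * s) with hh1
  have hfeq : f = fun t => Real.cos (t * s / 2) - k * Real.sin (t * s / 2) := funext hf
  have hF : ∀ t, HasDerivAt f (f1 t) t := by
    intro t
    rw [hfeq]
    exact (hcos t).sub ((hsin t).const_mul k)
  have hH : ∀ t, HasDerivAt h (h1 t) t := by
    intro t
    exact (hcos2 t).sub ((hsin2 t).const_mul (k / 2))
  have hgeq : g = fun t => -f t + h t := funext hgh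
  have hG : ∀ t, HasDerivAt g (-f1 t + h1 t) t := by
    intro t
    rw [hgeq]
    exact (hF t).neg.add (hH t)
  -- second derivatives
  set f2 : ℝ → ℝ := fun t => -(Real.cos (t * s / 2) * (s / 2)) * (s / 2)
      - k * (-Real.sin (t * s / 2) * (s / 2) * (s / 2)) with hf2
  set h2 : ℝ → ℝ := fun t => -(Real.cos (t * s) * s) * s
      - k / 2 * (-Real.sin (t * s) * s * s) with hh2
  have hF2 : ∀ t, HasDerivAt f1 (f2 t) t := by
    intro t
    exact ((hsin t).neg.mul_const (s / 2)).sub (((hcos t).mul_const (s / 2)).const_mul k)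
  have hH2 : ∀ t, HasDerivAt h1 (h2 t) t := by
    intro t
    exact ((hsin2 t).neg.mul_const s).sub (((hcos2 t).mul_const s).const_mul (k / 2))
  -- key scalar identities
  have hf2f : ∀ t, f2 t = -(c / 4) * f t := by
    intro t
    rw [hf2, hf, ← hs2]
    ring
  have hh2h : ∀ t, h2 t = -c * h t := by
    intro t
    rw [hh2, hhdef, ← hs2]
    ring
  -- derivatives of X
  set D1 : ℝ → E := fun t => f1 t • e + (A * (-f1 t + h1 t)) • w with hD1def
  have hXeq : X = fun t => f t • e + (A * g t) • w := funext hX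
  have hX1 : ∀ t, HasDerivAt X (D1 t) t := by
    intro t
    rw [hXeq]
    exact ((hF t).smul_const e).add (((hG t).const_mul A).smul_const w)
  have hderivX : deriv X = D1 := funext fun t => (hX1 t).deriv
  have hX2 : ∀ t, HasDerivAt D1 (f2 t • e + (A * (-f2 t + h2 t)) • w) t := by
    intro t
    exact ((hF2 t).smul_const e).add
      ((((hF2 t).neg.add (hH2 t)).const_mul A).smul_const w)
  have hww : ⟪w, w⟫ = 1 := by
    rw [real_inner_self_eq_norm_sq, hw]; norm_num
  refine ⟨?_, ?_, ?_⟩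
  · rw [hX 0, hf 0, hg 0]
    simp
  · have hz : (0 : ℝ) * s / 2 = 0 := by ring
    have hz2 : (0 : ℝ) * s = 0 := by ring
    have hf10 : f1 0 = -lam := by
      simp only [hf1, hz, Real.sin_zero, Real.cos_zero, neg_zero, zero_mul, one_mul]
      rw [hkdef]
      field_simp
      simp
    have hh10 : h1 0 = -lam := by
      simp only [hh1, hz2, Real.sin_zero, Real.cos_zero, neg_zero, zero_mul, one_mul]
      rw [hkdef]
      field_simp
      ring
    rw [hderivX]
    show f1 0 • e + (A * (-f1 0 + h1 0)) • w = (-lam) • e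
    rw [hf10, hh10]
    simp
  · intro t
    rw [hderivX, (hX2 t).deriv, hX t]
    have hinner : ⟪f t • e + (A * g t) • w, w⟫ = f t * A + A * g t := by
      rw [inner_add_left, real_inner_smul_left, real_inner_smul_left, hww, hA]
      ring
    rw [hinner, hf2f t, hh2h t, hgh t]
    module
end

section
/- Let c < 0, let λ₁, λ₂, b₁, b₂ ∈ ℝ with b₁² + b₂² = 1, and define D : ℝ → ℝ by D(r) = f_{λ₁}(r)·f_{λ₂}(r) + b₁²·f_{λ₂}(r)·g_{λ₁}(r) + b₂²·f_{λ₁}(r)·g_{λ₂}(r). Then D(0) = 1, and the radial mean curvature function h(r) := -D'(r)/(2·D(r)) (defined for r near 0) has the second-order Taylor expansion at r = 0: h(r) = (λ₁+λ₂)/2 + (r/2)·(5c/4 + λ₁² + λ₂²) + (r²/8)·( c·(λ₁+λ₂) + 4·(λ₁³+λ₂³) + 3c·(λ₁·b₁² + λ₂·b₂²) ) + O(r³), i.e. the difference between h(r) and the displayed quadratic polynomial in r is O(r³) as r → 0. -/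
open Real Filter Asymptotics

set_option maxHeartbeats 1000000

namespace Stmt4Aux

/-- `u` approximates `p` to order 2 at `0`: the difference is `O(r^3)`. -/
def N3 (u p : ℝ → ℝ) : Prop := (fun r => u r - p r) =O[nhds (0:ℝ)] fun r => r ^ 3

theorem N3.refl (u : ℝ → ℝ) : N3 u u := by
  unfold N3; simpa using isBigO_zero (E' := ℝ) (fun r : ℝ => r ^ 3) (nhds 0)

theorem N3.add {u p v q : ℝ → ℝ} (h1 : N3 u p) (h2 : N3 v q) :
    N3 (fun r => u r + v r) (fun r => p r + q r) := by
  unfold N3 at *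
  have key : (fun r => u r + v r - (p r + q r)) = fun r => (u r - p r) + (v r - q r) := by
    funext r; ring
  rw [key]; exact h1.add h2

theorem N3.sub {u p v q : ℝ → ℝ} (h1 : N3 u p) (h2 : N3 v q) :
    N3 (fun r => u r - v r) (fun r => p r - q r) := by
  unfold N3 at *
  have key : (fun r => u r - v r - (p r - q r)) = fun r => (u r - p r) - (v r - q r) := by
    funext r; ring
  rw [key]; exact h1.sub h2

theorem N3.neg {u p : ℝ → ℝ} (h : N3 u p) : N3 (fun r => -(u r)) (fun r => -(p r)) := by
  unfold N3 at *
  have key : (fun r => -(u r) - -(p r)) = fun r => -(u r - p r) := by funext r; ring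
  rw [key]; exact h.neg_left

theorem N3.cmul {u p : ℝ → ℝ} (k : ℝ) (h : N3 u p) :
    N3 (fun r => k * u r) (fun r => k * p r) := by
  unfold N3 at *
  have key : (fun r => k * u r - k * p r) = fun r => k * (u r - p r) := by funext r; ring
  rw [key]; exact h.const_mul_left k

theorem N3.congr {u p q : ℝ → ℝ} (w : ℝ → ℝ) (h : N3 u p) (hw : ContinuousAt w 0)
    (hs : ∀ r, p r = q r + r ^ 3 * w r) : N3 u q := by
  unfold N3 at *
  have key : (fun r => u r - q r) = fun r => (u r - p r) + r ^ 3 * w r := by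
    funext r; linear_combination hs r
  rw [key]
  have hwO : w =O[nhds (0:ℝ)] (fun _ => (1:ℝ)) := Filter.Tendsto.isBigO_one ℝ hw
  have e3 : (fun r : ℝ => r ^ 3 * w r) =O[nhds (0:ℝ)] fun r => r ^ 3 := by
    simpa using (isBigO_refl (fun r : ℝ => r ^ 3) (nhds 0)).mul hwO
  exact h.add e3

theorem N3.congr_fun {u u' p : ℝ → ℝ} (h : ∀ r, u r = u' r) (h2 : N3 u' p) : N3 u p := by
  unfold N3 at *
  have key : (fun r => u r - p r) = fun r => u' r - p r := by funext r; rw [h r]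
  rw [key]; exact h2

theorem N3.mul {u p v q s : ℝ → ℝ} (w : ℝ → ℝ) (h1 : N3 u p) (h2 : N3 v q)
    (hv : ContinuousAt v 0) (hp : ContinuousAt p 0) (hw : ContinuousAt w 0)
    (hs : ∀ r, p r * q r = s r + r ^ 3 * w r) :
    N3 (fun r => u r * v r) s := by
  unfold N3 at *
  have key : (fun r => u r * v r - s r)
      = fun r => ((u r - p r) * v r + p r * (v r - q r)) + r ^ 3 * w r := by
    funext r; linear_combination hs r
  rw [key]
  have hvO : v =O[nhds (0:ℝ)] (fun _ => (1:ℝ)) := Filter.Tendsto.isBigO_one ℝ hv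
  have hpO : p =O[nhds (0:ℝ)] (fun _ => (1:ℝ)) := Filter.Tendsto.isBigO_one ℝ hp
  have hwO : w =O[nhds (0:ℝ)] (fun _ => (1:ℝ)) := Filter.Tendsto.isBigO_one ℝ hw
  have e1 : (fun r => (u r - p r) * v r) =O[nhds (0:ℝ)] fun r => r ^ 3 := by
    simpa using h1.mul hvO
  have e2 : (fun r => p r * (v r - q r)) =O[nhds (0:ℝ)] fun r => r ^ 3 := by
    simpa using hpO.mul h2
  have e3 : (fun r : ℝ => r ^ 3 * w r) =O[nhds (0:ℝ)] fun r => r ^ 3 := by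
    simpa using (isBigO_refl (fun r : ℝ => r ^ 3) (nhds 0)).mul hwO
  exact (e1.add e2).add e3

theorem expO : (fun x : ℝ => Real.exp x - (1 + x + x ^ 2 / 2)) =O[nhds (0:ℝ)] fun x => x ^ 3 := by
  have h := Real.exp_sub_sum_range_isBigO_pow 3
  have key : (fun x : ℝ => Real.exp x - (1 + x + x ^ 2 / 2))
      = fun x : ℝ => Real.exp x - ∑ i ∈ Finset.range 3, x ^ i / (Nat.factorial i : ℝ) := by
    funext x
    rw [Finset.sum_range_succ, Finset.sum_range_succ, Finset.sum_range_succ]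
    norm_num [Nat.factorial]
  rw [key]; exact h

theorem compO {w : ℝ → ℝ} (hw : w =O[nhds (0:ℝ)] fun x => x ^ 3) (k : ℝ) :
    (fun r => w (k * r)) =O[nhds (0:ℝ)] fun r => r ^ 3 := by
  have t : Filter.Tendsto (fun r : ℝ => k * r) (nhds 0) (nhds 0) := by
    simpa using (continuous_mul_left k).tendsto (0:ℝ)
  have h2 := hw.comp_tendsto t
  simp only [Function.comp_def] at h2
  have h3 : (fun r : ℝ => (k * r) ^ 3) =O[nhds (0:ℝ)] fun r => r ^ 3 := by
    have key : (fun r : ℝ => (k * r) ^ 3) = fun r => k ^ 3 * r ^ 3 := by funext r; ring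
    rw [key]; exact isBigO_const_mul_self _ _ _
  exact h2.trans h3

end Stmt4Aux

open Stmt4Aux

/-- For `c < 0`, principal curvatures `λ₁, λ₂` and coefficients
`b₁, b₂` with `b₁² + b₂² = 1`, the radial Jacobian determinant
`D r = f_{λ₁} f_{λ₂} + b₁² f_{λ₂} g_{λ₁} + b₂² f_{λ₁} g_{λ₂}` satisfies `D 0 = 1`, and
the radial mean curvature `h r = -D'(r)/(2 D r)` has the stated second-order Taylor
expansion at `r = 0`, with remainder `O(r³)`. -/
theorem stmt_4 (c : ℝ) (hc : c < 0) (lam₁ lam₂ b₁ b₂ : ℝ) (hb : b₁ ^ 2 + b₂ ^ 2 = 1)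
    (f g : ℝ → ℝ → ℝ)
    (hf : ∀ lam t, f lam t = Real.cosh (t * Real.sqrt (-c) / 2)
        - (2 * lam / Real.sqrt (-c)) * Real.sinh (t * Real.sqrt (-c) / 2))
    (hg : ∀ lam t, g lam t = (Real.cosh (t * Real.sqrt (-c) / 2) - 1)
        * (1 + 2 * Real.cosh (t * Real.sqrt (-c) / 2)
          - (2 * lam / Real.sqrt (-c)) * Real.sinh (t * Real.sqrt (-c) / 2)))
    (D : ℝ → ℝ)
    (hD : ∀ r, D r = f lam₁ r * f lam₂ r + b₁ ^ 2 * (f lam₂ r * g lam₁ r)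
        + b₂ ^ 2 * (f lam₁ r * g lam₂ r))
    (h : ℝ → ℝ) (hh : ∀ r, h r = -(deriv D r) / (2 * D r)) :
    D 0 = 1 ∧
    (fun r : ℝ => h r -
        ((lam₁ + lam₂) / 2
          + r / 2 * (5 * c / 4 + lam₁ ^ 2 + lam₂ ^ 2)
          + r ^ 2 / 8 * (c * (lam₁ + lam₂) + 4 * (lam₁ ^ 3 + lam₂ ^ 3)
              + 3 * c * (lam₁ * b₁ ^ 2 + lam₂ * b₂ ^ 2))))
      =O[nhds 0] (fun r : ℝ => r ^ 3) := by
  have hc0 : (0:ℝ) < -c := by linarith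
  set a := Real.sqrt (-c) with ha_def
  have ha0 : 0 < a := Real.sqrt_pos.mpr hc0
  have ha : a ≠ 0 := ne_of_gt ha0
  have ha2 : a ^ 2 = -c := Real.sq_sqrt (le_of_lt hc0)
  have hc2 : c = -a ^ 2 := by linarith
  have hb2 : b₂ ^ 2 = 1 - b₁ ^ 2 := by linarith
  -- explicit formula for D
  have hDr : ∀ t, D t =
      (Real.cosh (t * a / 2) - 2 * lam₁ / a * Real.sinh (t * a / 2)) *
        (Real.cosh (t * a / 2) - 2 * lam₂ / a * Real.sinh (t * a / 2))
      + b₁ ^ 2 * ((Real.cosh (t * a / 2) - 2 * lam₂ / a * Real.sinh (t * a / 2)) *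
          ((Real.cosh (t * a / 2) - 1) *
            (1 + 2 * Real.cosh (t * a / 2) - 2 * lam₁ / a * Real.sinh (t * a / 2))))
      + b₂ ^ 2 * ((Real.cosh (t * a / 2) - 2 * lam₁ / a * Real.sinh (t * a / 2)) *
          ((Real.cosh (t * a / 2) - 1) *
            (1 + 2 * Real.cosh (t * a / 2) - 2 * lam₂ / a * Real.sinh (t * a / 2)))) := by
    intro t
    simp only [hD, hf, hg]
    try ring
  have hD0 : D 0 = 1 := by rw [hDr 0]; norm_num
  refine ⟨hD0, ?_⟩
  -- derivatives of the building blocks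
  have dch : ∀ t : ℝ, HasDerivAt (fun s => Real.cosh (s * a / 2))
      (Real.sinh (t * a / 2) * (a / 2)) t := by
    intro t
    have h1 : HasDerivAt (fun s : ℝ => s * a / 2) (a / 2) t := by
      simpa using ((hasDerivAt_id t).mul_const a).div_const 2
    exact (Real.hasDerivAt_cosh (t * a / 2)).comp t h1
  have dsh : ∀ t : ℝ, HasDerivAt (fun s => Real.sinh (s * a / 2))
      (Real.cosh (t * a / 2) * (a / 2)) t := by
    intro t
    have h1 : HasDerivAt (fun s : ℝ => s * a / 2) (a / 2) t := by
      simpa using ((hasDerivAt_id t).mul_const a).div_const 2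
    exact (Real.hasDerivAt_sinh (t * a / 2)).comp t h1
  have dF : ∀ lam (t : ℝ), HasDerivAt
      (fun s => Real.cosh (s * a / 2) - 2 * lam / a * Real.sinh (s * a / 2))
      (a / 2 * Real.sinh (t * a / 2) - lam * Real.cosh (t * a / 2)) t := by
    intro lam t
    have key := (dch t).sub ((dsh t).const_mul (2 * lam / a))
    refine key.congr_deriv ?_
    linear_combination (-(lam * Real.cosh (t * a / 2))) * (div_self ha : a / a = 1)
    try ring
  have dG : ∀ lam (t : ℝ), HasDerivAt
      (fun s => (Real.cosh (s * a / 2) - 1) *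
        (1 + 2 * Real.cosh (s * a / 2) - 2 * lam / a * Real.sinh (s * a / 2)))
      (a / 2 * Real.sinh (t * a / 2) *
          (1 + 2 * Real.cosh (t * a / 2) - 2 * lam / a * Real.sinh (t * a / 2))
        + (Real.cosh (t * a / 2) - 1) *
          (a * Real.sinh (t * a / 2) - lam * Real.cosh (t * a / 2))) t := by
    intro lam t
    have h1 := (dch t).sub_const 1
    have h2 := (((dch t).const_mul 2).const_add 1).sub ((dsh t).const_mul (2 * lam / a))
    have key := h1.mul h2
    refine key.congr_deriv ?_
    simp only [Pi.sub_apply]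
    linear_combination (-((Real.cosh (t * a / 2) - 1) * lam * Real.cosh (t * a / 2))) * (div_self ha : a / a = 1)
    try ring
  -- explicit derivative of D
  set DD : ℝ → ℝ := fun t =>
      ((a / 2 * Real.sinh (t * a / 2) - lam₁ * Real.cosh (t * a / 2)) *
          (Real.cosh (t * a / 2) - 2 * lam₂ / a * Real.sinh (t * a / 2))
        + (Real.cosh (t * a / 2) - 2 * lam₁ / a * Real.sinh (t * a / 2)) *
          (a / 2 * Real.sinh (t * a / 2) - lam₂ * Real.cosh (t * a / 2)))
      + b₁ ^ 2 * ((a / 2 * Real.sinh (t * a / 2) - lam₂ * Real.cosh (t * a / 2)) *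
            ((Real.cosh (t * a / 2) - 1) *
              (1 + 2 * Real.cosh (t * a / 2) - 2 * lam₁ / a * Real.sinh (t * a / 2)))
          + (Real.cosh (t * a / 2) - 2 * lam₂ / a * Real.sinh (t * a / 2)) *
            (a / 2 * Real.sinh (t * a / 2) *
                (1 + 2 * Real.cosh (t * a / 2) - 2 * lam₁ / a * Real.sinh (t * a / 2))
              + (Real.cosh (t * a / 2) - 1) *
                (a * Real.sinh (t * a / 2) - lam₁ * Real.cosh (t * a / 2))))
      + b₂ ^ 2 * ((a / 2 * Real.sinh (t * a / 2) - lam₁ * Real.cosh (t * a / 2)) *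
            ((Real.cosh (t * a / 2) - 1) *
              (1 + 2 * Real.cosh (t * a / 2) - 2 * lam₂ / a * Real.sinh (t * a / 2)))
          + (Real.cosh (t * a / 2) - 2 * lam₁ / a * Real.sinh (t * a / 2)) *
            (a / 2 * Real.sinh (t * a / 2) *
                (1 + 2 * Real.cosh (t * a / 2) - 2 * lam₂ / a * Real.sinh (t * a / 2))
              + (Real.cosh (t * a / 2) - 1) *
                (a * Real.sinh (t * a / 2) - lam₂ * Real.cosh (t * a / 2)))) with hDD
  have hDfun : D = fun t =>
      (Real.cosh (t * a / 2) - 2 * lam₁ / a * Real.sinh (t * a / 2)) *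
        (Real.cosh (t * a / 2) - 2 * lam₂ / a * Real.sinh (t * a / 2))
      + b₁ ^ 2 * ((Real.cosh (t * a / 2) - 2 * lam₂ / a * Real.sinh (t * a / 2)) *
          ((Real.cosh (t * a / 2) - 1) *
            (1 + 2 * Real.cosh (t * a / 2) - 2 * lam₁ / a * Real.sinh (t * a / 2))))
      + b₂ ^ 2 * ((Real.cosh (t * a / 2) - 2 * lam₁ / a * Real.sinh (t * a / 2)) *
          ((Real.cosh (t * a / 2) - 1) *
            (1 + 2 * Real.cosh (t * a / 2) - 2 * lam₂ / a * Real.sinh (t * a / 2)))) :=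
    funext hDr
  have dDD : ∀ t, HasDerivAt D (DD t) t := by
    intro t
    rw [hDfun]
    exact (((dF lam₁ t).mul (dF lam₂ t)).add
        (HasDerivAt.const_mul (b₁ ^ 2) ((dF lam₂ t).mul (dG lam₁ t)))).add
      (HasDerivAt.const_mul (b₂ ^ 2) ((dF lam₁ t).mul (dG lam₂ t)))
  have hderiv : ∀ t, deriv D t = DD t := fun t => (dDD t).deriv
  -- base approximations
  have HCH : N3 (fun r => Real.cosh (r * a / 2)) (fun r => 1 - c / 8 * r ^ 2) := by
    have h1 := compO expO (a / 2)
    have h2 := compO expO (-(a / 2))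
    unfold N3
    have key : (fun r => Real.cosh (r * a / 2) - (1 - c / 8 * r ^ 2))
        = fun r => (1/2) * ((Real.exp (a / 2 * r) - (1 + a / 2 * r + (a / 2 * r) ^ 2 / 2))
            + (Real.exp (-(a / 2) * r) - (1 + -(a / 2) * r + (-(a / 2) * r) ^ 2 / 2))) := by
      funext r
      rw [show r * a / 2 = a / 2 * r by ring, Real.cosh_eq,
        show -(a / 2 * r) = -(a / 2) * r by ring, hc2]
      ring
    rw [key]
    exact (h1.add h2).const_mul_left (1/2)
  have HSH : N3 (fun r => Real.sinh (r * a / 2)) (fun r => a * r / 2) := by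
    have h1 := compO expO (a / 2)
    have h2 := compO expO (-(a / 2))
    unfold N3
    have key : (fun r => Real.sinh (r * a / 2) - a * r / 2)
        = fun r => (1/2) * ((Real.exp (a / 2 * r) - (1 + a / 2 * r + (a / 2 * r) ^ 2 / 2))
            - (Real.exp (-(a / 2) * r) - (1 + -(a / 2) * r + (-(a / 2) * r) ^ 2 / 2))) := by
      funext r
      rw [show r * a / 2 = a / 2 * r by ring, Real.sinh_eq,
        show -(a / 2 * r) = -(a / 2) * r by ring]
      ring
    rw [key]
    exact (h1.sub h2).const_mul_left (1/2)
  -- derived approximations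
  have HF : ∀ lam, N3 (fun r => Real.cosh (r * a / 2) - 2 * lam / a * Real.sinh (r * a / 2))
      (fun r => 1 - lam * r - c / 8 * r ^ 2) := by
    intro lam
    refine N3.congr (fun _ => 0) (N3.sub HCH (N3.cmul (2 * lam / a) HSH))
      continuousAt_const fun r => ?_
    field_simp
    try ring
  have HFp : ∀ lam, N3 (fun r => a / 2 * Real.sinh (r * a / 2) - lam * Real.cosh (r * a / 2))
      (fun r => -lam - c / 4 * r + lam * c / 8 * r ^ 2) := by
    intro lam
    refine N3.congr (fun _ => 0) (N3.sub (N3.cmul (a / 2) HSH) (N3.cmul lam HCH))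
      continuousAt_const fun r => ?_
    rw [hc2]; ring
  have HU1 : N3 (fun r => Real.cosh (r * a / 2) - 1) (fun r => -(c / 8) * r ^ 2) := by
    refine N3.congr (fun _ => 0) (N3.sub HCH (N3.refl fun _ => 1))
      continuousAt_const fun r => ?_
    ring
  have HU2 : ∀ lam, N3
      (fun r => 1 + 2 * Real.cosh (r * a / 2) - 2 * lam / a * Real.sinh (r * a / 2))
      (fun r => 3 - lam * r - c / 4 * r ^ 2) := by
    intro lam
    refine N3.congr (fun _ => 0) (N3.sub (N3.add (N3.refl fun _ => 1) (N3.cmul 2 HCH))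
      (N3.cmul (2 * lam / a) HSH)) continuousAt_const fun r => ?_
    field_simp
    try ring
  have HG : ∀ lam, N3 (fun r => (Real.cosh (r * a / 2) - 1) *
      (1 + 2 * Real.cosh (r * a / 2) - 2 * lam / a * Real.sinh (r * a / 2)))
      (fun r => -(3 * c / 8) * r ^ 2) := by
    intro lam
    refine N3.mul (fun r => lam * c / 8 + c ^ 2 / 32 * r) HU1 (HU2 lam)
      (by fun_prop) (by fun_prop) (by fun_prop) fun r => ?_
    ring
  have HV1 : N3 (fun r => a / 2 * Real.sinh (r * a / 2)) (fun r => -(c / 4) * r) := by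
    refine N3.congr (fun _ => 0) (N3.cmul (a / 2) HSH) continuousAt_const fun r => ?_
    rw [hc2]; ring
  have HQ : ∀ lam, N3 (fun r => a * Real.sinh (r * a / 2) - lam * Real.cosh (r * a / 2))
      (fun r => -lam - c / 2 * r + lam * c / 8 * r ^ 2) := by
    intro lam
    refine N3.congr (fun _ => 0) (N3.sub (N3.cmul a HSH) (N3.cmul lam HCH))
      continuousAt_const fun r => ?_
    rw [hc2]; ring
  have HGp : ∀ lam, N3 (fun r => a / 2 * Real.sinh (r * a / 2) *
      (1 + 2 * Real.cosh (r * a / 2) - 2 * lam / a * Real.sinh (r * a / 2))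
      + (Real.cosh (r * a / 2) - 1) *
        (a * Real.sinh (r * a / 2) - lam * Real.cosh (r * a / 2)))
      (fun r => (-(3 * c / 4) * r + lam * c / 4 * r ^ 2) + lam * c / 8 * r ^ 2) := by
    intro lam
    exact N3.add (N3.mul (fun _ => c ^ 2 / 16) HV1 (HU2 lam) (by fun_prop) (by fun_prop)
        (by fun_prop) fun r => by ring)
      (N3.mul (fun r => c ^ 2 / 16 - lam * c ^ 2 / 64 * r) HU1 (HQ lam) (by fun_prop)
        (by fun_prop) (by fun_prop) fun r => by ring)
  -- approximations for D and DD
  have H_ff := N3.mul (fun r => (lam₁ * c / 8 + lam₂ * c / 8) + c ^ 2 / 64 * r)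
    (HF lam₁) (HF lam₂)
    (by fun_prop) (by fun_prop) (by fun_prop)
    (s := fun r => 1 - (lam₁ + lam₂) * r + (lam₁ * lam₂ - c / 4) * r ^ 2) (fun r => by ring)
  have H_f2g1 := N3.mul (fun r => 3 * lam₂ * c / 8 + 3 * c ^ 2 / 64 * r) (HF lam₂) (HG lam₁)
    (by fun_prop) (by fun_prop) (by fun_prop)
    (s := fun r => -(3 * c / 8) * r ^ 2) (fun r => by ring)
  have H_f1g2 := N3.mul (fun r => 3 * lam₁ * c / 8 + 3 * c ^ 2 / 64 * r) (HF lam₁) (HG lam₂)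
    (by fun_prop) (by fun_prop) (by fun_prop)
    (s := fun r => -(3 * c / 8) * r ^ 2) (fun r => by ring)
  have HDapprox : N3 D (fun r =>
      (1 - (lam₁ + lam₂) * r + (lam₁ * lam₂ - c / 4) * r ^ 2)
      + b₁ ^ 2 * (-(3 * c / 8) * r ^ 2) + b₂ ^ 2 * (-(3 * c / 8) * r ^ 2)) :=
    N3.congr_fun hDr ((H_ff.add (N3.cmul (b₁ ^ 2) H_f2g1)).add (N3.cmul (b₂ ^ 2) H_f1g2))
  have H7 := N3.mul (fun r => c ^ 2 / 32 - lam₁ * lam₂ * c / 8 - lam₁ * c ^ 2 / 64 * r)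
    (HFp lam₁) (HF lam₂)
    (by fun_prop) (by fun_prop) (by fun_prop)
    (s := fun r => -lam₁ + (-(c / 4) + lam₁ * lam₂) * r + (lam₂ * c / 4 + lam₁ * c / 4) * r ^ 2)
    (fun r => by ring)
  have H8 := N3.mul (fun r => c ^ 2 / 32 - lam₁ * lam₂ * c / 8 - lam₂ * c ^ 2 / 64 * r)
    (HF lam₁) (HFp lam₂)
    (by fun_prop) (by fun_prop) (by fun_prop)
    (s := fun r => -lam₂ + (-(c / 4) + lam₁ * lam₂) * r + (lam₂ * c / 4 + lam₁ * c / 4) * r ^ 2)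
    (fun r => by ring)
  have H9 := N3.mul (fun r => 3 * c ^ 2 / 32 - 3 * lam₂ * c ^ 2 / 64 * r)
    (HFp lam₂) (HG lam₁)
    (by fun_prop) (by fun_prop) (by fun_prop)
    (s := fun r => 3 * lam₂ * c / 8 * r ^ 2) (fun r => by ring)
  have H10 := N3.mul
    (fun r => 3 * c ^ 2 / 32 - 3 * lam₁ * lam₂ * c / 8 - 3 * lam₁ * c ^ 2 / 64 * r)
    (HF lam₂) (HGp lam₁)
    (by fun_prop) (by fun_prop) (by fun_prop)
    (s := fun r => -(3 * c / 4) * r + (3 * lam₂ * c / 4 + 3 * lam₁ * c / 8) * r ^ 2)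
    (fun r => by ring)
  have H11 := N3.mul (fun r => 3 * c ^ 2 / 32 - 3 * lam₁ * c ^ 2 / 64 * r)
    (HFp lam₁) (HG lam₂)
    (by fun_prop) (by fun_prop) (by fun_prop)
    (s := fun r => 3 * lam₁ * c / 8 * r ^ 2) (fun r => by ring)
  have H12 := N3.mul
    (fun r => 3 * c ^ 2 / 32 - 3 * lam₁ * lam₂ * c / 8 - 3 * lam₂ * c ^ 2 / 64 * r)
    (HF lam₁) (HGp lam₂)
    (by fun_prop) (by fun_prop) (by fun_prop)
    (s := fun r => -(3 * c / 4) * r + (3 * lam₁ * c / 4 + 3 * lam₂ * c / 8) * r ^ 2)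
    (fun r => by ring)
  have HDDapprox : N3 DD (fun r =>
      ((-lam₁ + (-(c / 4) + lam₁ * lam₂) * r + (lam₂ * c / 4 + lam₁ * c / 4) * r ^ 2)
        + (-lam₂ + (-(c / 4) + lam₁ * lam₂) * r + (lam₂ * c / 4 + lam₁ * c / 4) * r ^ 2))
      + b₁ ^ 2 * (3 * lam₂ * c / 8 * r ^ 2
        + (-(3 * c / 4) * r + (3 * lam₂ * c / 4 + 3 * lam₁ * c / 8) * r ^ 2))
      + b₂ ^ 2 * (3 * lam₁ * c / 8 * r ^ 2
        + (-(3 * c / 4) * r + (3 * lam₁ * c / 4 + 3 * lam₂ * c / 8) * r ^ 2))) := by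
    rw [hDD]
    exact ((H7.add H8).add (N3.cmul (b₁ ^ 2) (H9.add H10))).add
      (N3.cmul (b₂ ^ 2) (H11.add H12))
  -- the target polynomial P
  set P : ℝ → ℝ := fun r =>
      (lam₁ + lam₂) / 2 + r / 2 * (5 * c / 4 + lam₁ ^ 2 + lam₂ ^ 2)
        + r ^ 2 / 8 * (c * (lam₁ + lam₂) + 4 * (lam₁ ^ 3 + lam₂ ^ 3)
            + 3 * c * (lam₁ * b₁ ^ 2 + lam₂ * b₂ ^ 2)) with hP
  have HDP := N3.mul
    (fun r => (-25/64:ℝ)*c^2 + (-13/16:ℝ)*lam₂^2*c + (3/8:ℝ)*lam₂^2*b₁^2*c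
      + (-1/2:ℝ)*lam₂^4 + (-7/16:ℝ)*lam₁^2*c + (-3/8:ℝ)*lam₁^2*b₁^2*c + (-1/2:ℝ)*lam₁^4
      + (-5/16:ℝ)*r*lam₂*c^2 + (15/64:ℝ)*r*lam₂*b₁^2*c^2 + (-5/16:ℝ)*r*lam₂^3*c
      + (-5/64:ℝ)*r*lam₁*c^2 + (-15/64:ℝ)*r*lam₁*b₁^2*c^2 + (1/2:ℝ)*r*lam₁*lam₂^2*c
      + (-3/8:ℝ)*r*lam₁*lam₂^2*b₁^2*c + (1/2:ℝ)*r*lam₁*lam₂^4 + (1/8:ℝ)*r*lam₁^2*lam₂*c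
      + (3/8:ℝ)*r*lam₁^2*lam₂*b₁^2*c + (-5/16:ℝ)*r*lam₁^3*c + (1/2:ℝ)*r*lam₁^4*lam₂)
    HDapprox (N3.refl P) (by rw [hP]; fun_prop) (by fun_prop) (by fun_prop)
    (s := fun r => (1/2:ℝ)*lam₂ + (1/2:ℝ)*lam₁ + (5/8:ℝ)*r*c + (-1:ℝ)*r*lam₁*lam₂
      + (-7/16:ℝ)*r^2*lam₂*c + (-3/8:ℝ)*r^2*lam₂*b₁^2*c + (-13/16:ℝ)*r^2*lam₁*c
      + (3/8:ℝ)*r^2*lam₁*b₁^2*c)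
    (fun r => by rw [hP]; simp only; rw [hb2]; ring)
  -- the error function E := -DD - 2 D·P is O(r³)
  have HE : N3 (fun r => -(DD r) - 2 * (D r * P r)) (fun _ => 0) := by
    refine N3.congr (fun _ => 0) (N3.sub (N3.neg HDDapprox) (N3.cmul 2 HDP))
      continuousAt_const fun r => ?_
    rw [hb2]
    ring
  have EO : (fun r => -(DD r) - 2 * (D r * P r)) =O[nhds (0:ℝ)] fun r => r ^ 3 := by
    have h' := HE
    unfold N3 at h'
    simpa using h'
  -- conclude
  have hDco : Continuous D := by
    rw [hDfun]
    fun_prop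
  have hne : ∀ᶠ r in nhds (0:ℝ), D r ≠ 0 :=
    hDco.continuousAt.eventually_ne (by rw [hD0]; norm_num)
  have heq : (fun r : ℝ => h r - P r)
      =ᶠ[nhds (0:ℝ)] fun r => (-(DD r) - 2 * (D r * P r)) * (2 * D r)⁻¹ := by
    filter_upwards [hne] with r hr
    rw [hh r, hderiv r]
    field_simp
  have hinv : ContinuousAt (fun r => (2 * D r)⁻¹) 0 :=
    ((continuous_const.mul hDco).continuousAt).inv₀ (by simp [hD0])
  have hinvO : (fun r => (2 * D r)⁻¹) =O[nhds (0:ℝ)] (fun _ => (1:ℝ)) :=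
    Filter.Tendsto.isBigO_one ℝ hinv
  have final : (fun r : ℝ => h r - P r) =O[nhds (0:ℝ)] fun r => r ^ 3 := by
    refine heq.trans_isBigO ?_
    simpa using EO.mul hinvO
  exact final
end

section
/- Let c > 0, let λ₁, λ₂, b₁, b₂ ∈ ℝ with b₁² + b₂² = 1, and define D : ℝ → ℝ by D(r) = f_{λ₁}(r)·f_{λ₂}(r) + b₁²·f_{λ₂}(r)·g_{λ₁}(r) + b₂²·f_{λ₁}(r)·g_{λ₂}(r). Then D(0) = 1, and the radial mean curvature function h(r) := -D'(r)/(2·D(r)) (defined for r near 0) has the second-order Taylor expansion at r = 0: h(r) = (λ₁+λ₂)/2 + (r/2)·(5c/4 + λ₁² + λ₂²) + (r²/8)·( c·(λ₁+λ₂) + 4·(λ₁³+λ₂³) + 3c·(λ₁·b₁² + λ₂·b₂²) ) + O(r³), i.e. the difference between h(r) and the displayed quadratic polynomial in r is O(r³) as r → 0. -/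
open Real Filter Asymptotics

/- Auxiliary definitions for the proof of `stmt_5`. -/

noncomputable def aC (s : ℝ) : ℝ → ℝ := fun r => Real.cos (r * s / 2)
noncomputable def aS (s : ℝ) : ℝ → ℝ := fun r => Real.sin (r * s / 2)
noncomputable def aC0 (s : ℝ) : ℝ → ℝ := fun r => 1 - s ^ 2 * r ^ 2 / 8
noncomputable def aS0 (s : ℝ) : ℝ → ℝ := fun r => s * r / 2

noncomputable def aff (s a : ℝ) : ℝ → ℝ := fun r => aC s r - a * aS s r
noncomputable def aKK (s a : ℝ) : ℝ → ℝ := fun r => 1 + 2 * aC s r - a * aS s r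
noncomputable def agg (s a : ℝ) : ℝ → ℝ := fun r => (aC s r - 1) * aKK s a r
noncomputable def aLL (s a : ℝ) : ℝ → ℝ := fun r => 2 * (-(s/2) * aS s r) - a * (s/2 * aC s r)
noncomputable def affd (s a : ℝ) : ℝ → ℝ := fun r => -(s/2) * aS s r - a * (s/2 * aC s r)
noncomputable def aggd (s a : ℝ) : ℝ → ℝ := fun r => (-(s/2) * aS s r) * aKK s a r + (aC s r - 1) * aLL s a r

noncomputable def aff0 (s a : ℝ) : ℝ → ℝ := fun r => aC0 s r - a * aS0 s r
noncomputable def aKK0 (s a : ℝ) : ℝ → ℝ := fun r => 1 + 2 * aC0 s r - a * aS0 s r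
noncomputable def agg0 (s a : ℝ) : ℝ → ℝ := fun r => (aC0 s r - 1) * aKK0 s a r
noncomputable def aLL0 (s a : ℝ) : ℝ → ℝ := fun r => 2 * (-(s/2) * aS0 s r) - a * (s/2 * aC0 s r)
noncomputable def affd0 (s a : ℝ) : ℝ → ℝ := fun r => -(s/2) * aS0 s r - a * (s/2 * aC0 s r)
noncomputable def aggd0 (s a : ℝ) : ℝ → ℝ := fun r => (-(s/2) * aS0 s r) * aKK0 s a r + (aC0 s r - 1) * aLL0 s a r

noncomputable def aFF (s l1 l2 β₁ β₂ : ℝ) : ℝ → ℝ := fun r =>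
  aff s (2*l1/s) r * aff s (2*l2/s) r
    + β₁ * (aff s (2*l2/s) r * agg s (2*l1/s) r)
    + β₂ * (aff s (2*l1/s) r * agg s (2*l2/s) r)

noncomputable def aFFd (s l1 l2 β₁ β₂ : ℝ) : ℝ → ℝ := fun r =>
  (affd s (2*l1/s) r * aff s (2*l2/s) r + aff s (2*l1/s) r * affd s (2*l2/s) r)
    + β₁ * (affd s (2*l2/s) r * agg s (2*l1/s) r + aff s (2*l2/s) r * aggd s (2*l1/s) r)
    + β₂ * (affd s (2*l1/s) r * agg s (2*l2/s) r + aff s (2*l1/s) r * aggd s (2*l2/s) r)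

noncomputable def aFF0 (s l1 l2 β₁ β₂ : ℝ) : ℝ → ℝ := fun r =>
  aff0 s (2*l1/s) r * aff0 s (2*l2/s) r
    + β₁ * (aff0 s (2*l2/s) r * agg0 s (2*l1/s) r)
    + β₂ * (aff0 s (2*l1/s) r * agg0 s (2*l2/s) r)

noncomputable def aFFd0 (s l1 l2 β₁ β₂ : ℝ) : ℝ → ℝ := fun r =>
  (affd0 s (2*l1/s) r * aff0 s (2*l2/s) r + aff0 s (2*l1/s) r * affd0 s (2*l2/s) r)
    + β₁ * (affd0 s (2*l2/s) r * agg0 s (2*l1/s) r + aff0 s (2*l2/s) r * aggd0 s (2*l1/s) r)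
    + β₂ * (affd0 s (2*l1/s) r * agg0 s (2*l2/s) r + aff0 s (2*l1/s) r * aggd0 s (2*l2/s) r)

noncomputable def aPP (s l1 l2 β₁ β₂ : ℝ) : ℝ → ℝ := fun r =>
  (l1 + l2) / 2 + r / 2 * (5 * s ^ 2 / 4 + l1 ^ 2 + l2 ^ 2)
    + r ^ 2 / 8 * (s ^ 2 * (l1 + l2) + 4 * (l1 ^ 3 + l2 ^ 3) + 3 * s ^ 2 * (l1 * β₁ + l2 * β₂))

noncomputable def aEE (s l1 l2 β₁ β₂ : ℝ) : ℝ → ℝ := fun r =>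
  -(aFFd s l1 l2 β₁ β₂ r) - 2 * aFF s l1 l2 β₁ β₂ r * aPP s l1 l2 β₁ β₂ r

noncomputable def aEE0 (s l1 l2 β₁ β₂ : ℝ) : ℝ → ℝ := fun r =>
  -(aFFd0 s l1 l2 β₁ β₂ r) - 2 * aFF0 s l1 l2 β₁ β₂ r * aPP s l1 l2 β₁ β₂ r

set_option maxHeartbeats 1000000 in
noncomputable def aQQ (s l1 l2 β₁ : ℝ) : ℝ → ℝ := fun r =>
  (1 : ℝ) * l2^4
      + (1 : ℝ) * l1^4
      + (11/8 : ℝ) * s^2 * l2^2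
      + (-1 : ℝ) * s^2 * l2^2 * β₁
      + (3/8 : ℝ) * s^2 * l1^2
      + (1 : ℝ) * s^2 * l1^2 * β₁
      + (13/32 : ℝ) * s^4
      + (-1 : ℝ) * r * l1 * l2^4
      + (-1 : ℝ) * r * l1^4 * l2
      + (3/8 : ℝ) * r * s^2 * l2^3
      + (-1/4 : ℝ) * r * s^2 * l2^3 * β₁
      + (-11/8 : ℝ) * r * s^2 * l1 * l2^2
      + (1 : ℝ) * r * s^2 * l1 * l2^2 * β₁
      + (-3/8 : ℝ) * r * s^2 * l1^2 * l2
      + (-1 : ℝ) * r * s^2 * l1^2 * l2 * β₁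
      + (1/8 : ℝ) * r * s^2 * l1^3
      + (1/4 : ℝ) * r * s^2 * l1^3 * β₁
      + (21/64 : ℝ) * r * s^4 * l2
      + (-43/64 : ℝ) * r * s^4 * l2 * β₁
      + (-11/32 : ℝ) * r * s^4 * l1
      + (43/64 : ℝ) * r * s^4 * l1 * β₁
      + (-1/4 : ℝ) * r^2 * s^2 * l2^4
      + (-1/4 : ℝ) * r^2 * s^2 * l2^4 * β₁
      + (-3/8 : ℝ) * r^2 * s^2 * l1 * l2^3
      + (1/4 : ℝ) * r^2 * s^2 * l1 * l2^3 * β₁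
      + (-1/8 : ℝ) * r^2 * s^2 * l1^3 * l2
      + (-1/4 : ℝ) * r^2 * s^2 * l1^3 * l2 * β₁
      + (-1/2 : ℝ) * r^2 * s^2 * l1^4
      + (1/4 : ℝ) * r^2 * s^2 * l1^4 * β₁
      + (-21/64 : ℝ) * r^2 * s^4 * l2^2
      + (-3/64 : ℝ) * r^2 * s^4 * l2^2 * β₁
      + (3/16 : ℝ) * r^2 * s^4 * l2^2 * β₁^2
      + (-25/64 : ℝ) * r^2 * s^4 * l1 * l2
      + (3/8 : ℝ) * r^2 * s^4 * l1 * l2 * β₁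
      + (-3/8 : ℝ) * r^2 * s^4 * l1 * l2 * β₁^2
      + (-3/16 : ℝ) * r^2 * s^4 * l1^2
      + (-21/64 : ℝ) * r^2 * s^4 * l1^2 * β₁
      + (3/16 : ℝ) * r^2 * s^4 * l1^2 * β₁^2
      + (-3/32 : ℝ) * r^2 * s^6
      + (1/8 : ℝ) * r^3 * s^2 * l1 * l2^4
      + (1/8 : ℝ) * r^3 * s^2 * l1^4 * l2
      + (-5/64 : ℝ) * r^3 * s^4 * l2^3
      + (1/64 : ℝ) * r^3 * s^4 * l2^3 * β₁
      + (5/32 : ℝ) * r^3 * s^4 * l1 * l2^2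
      + (-7/64 : ℝ) * r^3 * s^4 * l1 * l2^2 * β₁
      + (3/64 : ℝ) * r^3 * s^4 * l1^2 * l2
      + (7/64 : ℝ) * r^3 * s^4 * l1^2 * l2 * β₁
      + (-1/16 : ℝ) * r^3 * s^4 * l1^3
      + (-1/64 : ℝ) * r^3 * s^4 * l1^3 * β₁
      + (-37/512 : ℝ) * r^3 * s^6 * l2
      + (45/512 : ℝ) * r^3 * s^6 * l2 * β₁
      + (1/64 : ℝ) * r^3 * s^6 * l1
      + (-45/512 : ℝ) * r^3 * s^6 * l1 * β₁
      + (1/64 : ℝ) * r^4 * s^4 * l2^4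
      + (1/64 : ℝ) * r^4 * s^4 * l2^4 * β₁
      + (1/32 : ℝ) * r^4 * s^4 * l1 * l2^3
      + (-1/64 : ℝ) * r^4 * s^4 * l1 * l2^3 * β₁
      + (1/64 : ℝ) * r^4 * s^4 * l1^3 * l2
      + (1/64 : ℝ) * r^4 * s^4 * l1^3 * l2 * β₁
      + (1/32 : ℝ) * r^4 * s^4 * l1^4
      + (-1/64 : ℝ) * r^4 * s^4 * l1^4 * β₁
      + (5/256 : ℝ) * r^4 * s^6 * l2^2
      + (1/256 : ℝ) * r^4 * s^6 * l2^2 * β₁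
      + (-3/256 : ℝ) * r^4 * s^6 * l2^2 * β₁^2
      + (9/256 : ℝ) * r^4 * s^6 * l1 * l2
      + (-3/128 : ℝ) * r^4 * s^6 * l1 * l2 * β₁
      + (3/128 : ℝ) * r^4 * s^6 * l1 * l2 * β₁^2
      + (3/256 : ℝ) * r^4 * s^6 * l1^2
      + (5/256 : ℝ) * r^4 * s^6 * l1^2 * β₁
      + (-3/256 : ℝ) * r^4 * s^6 * l1^2 * β₁^2
      + (5/1024 : ℝ) * r^4 * s^8
      + (1/256 : ℝ) * r^5 * s^6 * l2^3
      + (1/256 : ℝ) * r^5 * s^6 * l1^3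
      + (1/256 : ℝ) * r^5 * s^8 * l2
      + (-3/1024 : ℝ) * r^5 * s^8 * l2 * β₁
      + (1/1024 : ℝ) * r^5 * s^8 * l1
      + (3/1024 : ℝ) * r^5 * s^8 * l1 * β₁

/- Continuity facts. -/

@[fun_prop] lemma contC (s : ℝ) : Continuous (aC s) := by unfold aC; fun_prop
@[fun_prop] lemma contS (s : ℝ) : Continuous (aS s) := by unfold aS; fun_prop
@[fun_prop] lemma contC0 (s : ℝ) : Continuous (aC0 s) := by unfold aC0; fun_prop
@[fun_prop] lemma contS0 (s : ℝ) : Continuous (aS0 s) := by unfold aS0; fun_prop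
@[fun_prop] lemma contff (s a : ℝ) : Continuous (aff s a) := by unfold aff; fun_prop
@[fun_prop] lemma contKK (s a : ℝ) : Continuous (aKK s a) := by unfold aKK; fun_prop
@[fun_prop] lemma contgg (s a : ℝ) : Continuous (agg s a) := by unfold agg; fun_prop
@[fun_prop] lemma contLL (s a : ℝ) : Continuous (aLL s a) := by unfold aLL; fun_prop
@[fun_prop] lemma contffd (s a : ℝ) : Continuous (affd s a) := by unfold affd; fun_prop
@[fun_prop] lemma contggd (s a : ℝ) : Continuous (aggd s a) := by unfold aggd; fun_prop
@[fun_prop] lemma contff0 (s a : ℝ) : Continuous (aff0 s a) := by unfold aff0; fun_prop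
@[fun_prop] lemma contKK0 (s a : ℝ) : Continuous (aKK0 s a) := by unfold aKK0; fun_prop
@[fun_prop] lemma contgg0 (s a : ℝ) : Continuous (agg0 s a) := by unfold agg0; fun_prop
@[fun_prop] lemma contLL0 (s a : ℝ) : Continuous (aLL0 s a) := by unfold aLL0; fun_prop
@[fun_prop] lemma contffd0 (s a : ℝ) : Continuous (affd0 s a) := by unfold affd0; fun_prop
@[fun_prop] lemma contggd0 (s a : ℝ) : Continuous (aggd0 s a) := by unfold aggd0; fun_prop
@[fun_prop] lemma contFF (s l1 l2 β₁ β₂ : ℝ) : Continuous (aFF s l1 l2 β₁ β₂) := by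
  unfold aFF; fun_prop
@[fun_prop] lemma contFF0 (s l1 l2 β₁ β₂ : ℝ) : Continuous (aFF0 s l1 l2 β₁ β₂) := by
  unfold aFF0; fun_prop
@[fun_prop] lemma contPP (s l1 l2 β₁ β₂ : ℝ) : Continuous (aPP s l1 l2 β₁ β₂) := by
  unfold aPP; fun_prop
set_option maxHeartbeats 1000000 in
@[fun_prop] lemma contQQ (s l1 l2 β₁ : ℝ) : Continuous (aQQ s l1 l2 β₁) := by
  unfold aQQ; fun_prop

lemma bigO_one_of_continuous {φ : ℝ → ℝ} (h : Continuous φ) :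
    φ =O[nhds 0] (fun _ : ℝ => (1:ℝ)) :=
  (h.tendsto 0).isBigO_one ℝ

lemma mulO {w p p₀ q q₀ : ℝ → ℝ} (hp : (fun r => p r - p₀ r) =O[nhds 0] w)
    (hq : (fun r => q r - q₀ r) =O[nhds 0] w)
    (hqb : q =O[nhds 0] (fun _ : ℝ => (1:ℝ))) (hpb : p₀ =O[nhds 0] (fun _ : ℝ => (1:ℝ))) :
    (fun r => p r * q r - p₀ r * q₀ r) =O[nhds 0] w := by
  have h1 : (fun r => (p r - p₀ r) * q r) =O[nhds 0] w := by
    simpa only [mul_one] using hp.mul hqb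
  have h2 : (fun r => p₀ r * (q r - q₀ r)) =O[nhds 0] w := by
    simpa only [one_mul] using hpb.mul hq
  exact (h1.add h2).congr_left fun r => by ring

/- Smallness of the trigonometric remainders. -/

lemma hu0 (s : ℝ) (hs : 0 < s) :
    (fun r => aC s r - aC0 s r) =O[nhds 0] (fun r : ℝ => r ^ 3) := by
  refine IsBigO.of_bound ((s/2) ^ 3) ?_
  have hδ : (0:ℝ) < min 1 (2 / s) := lt_min one_pos (by positivity)
  filter_upwards [Metric.ball_mem_nhds (0:ℝ) hδ] with r hr
  rw [Metric.mem_ball, Real.dist_eq, sub_zero, lt_min_iff] at hr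
  have hxa : |r * s / 2| = |r| * (s / 2) := by
    rw [abs_div, abs_mul, abs_of_pos hs, abs_of_pos (two_pos : (0:ℝ) < 2)]
    ring
  have hx1 : |r * s / 2| ≤ 1 := by
    rw [hxa]
    calc |r| * (s / 2) ≤ (2 / s) * (s / 2) :=
          mul_le_mul_of_nonneg_right (le_of_lt hr.2) (by positivity)
      _ = 1 := by field_simp
  have hcb := Real.cos_bound hx1
  have hur : aC s r - aC0 s r = Real.cos (r * s / 2) - (1 - (r * s / 2) ^ 2 / 2) := by
    simp only [aC, aC0]; ring
  have h4 : |r * s / 2| ^ 4 ≤ |r * s / 2| ^ 3 :=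
    pow_le_pow_of_le_one (abs_nonneg _) hx1 (by norm_num)
  have h3n : (0:ℝ) ≤ |r * s / 2| ^ 3 := pow_nonneg (abs_nonneg _) 3
  rw [Real.norm_eq_abs, Real.norm_eq_abs, hur]
  calc |Real.cos (r * s / 2) - (1 - (r * s / 2) ^ 2 / 2)| ≤ |r * s / 2| ^ 4 * (5/96) := hcb
    _ ≤ |r * s / 2| ^ 3 := by nlinarith
    _ = (s/2) ^ 3 * |r| ^ 3 := by rw [hxa]; ring
    _ = (s/2) ^ 3 * |r ^ 3| := by rw [abs_pow]

lemma hv0 (s : ℝ) (hs : 0 < s) :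
    (fun r => aS s r - aS0 s r) =O[nhds 0] (fun r : ℝ => r ^ 3) := by
  refine IsBigO.of_bound ((s/2) ^ 3) ?_
  have hδ : (0:ℝ) < min 1 (2 / s) := lt_min one_pos (by positivity)
  filter_upwards [Metric.ball_mem_nhds (0:ℝ) hδ] with r hr
  rw [Metric.mem_ball, Real.dist_eq, sub_zero, lt_min_iff] at hr
  have hxa : |r * s / 2| = |r| * (s / 2) := by
    rw [abs_div, abs_mul, abs_of_pos hs, abs_of_pos (two_pos : (0:ℝ) < 2)]
    ring
  have hx1 : |r * s / 2| ≤ 1 := by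
    rw [hxa]
    calc |r| * (s / 2) ≤ (2 / s) * (s / 2) :=
          mul_le_mul_of_nonneg_right (le_of_lt hr.2) (by positivity)
      _ = 1 := by field_simp
  have hsb := Real.sin_bound hx1
  have hvr : aS s r - aS0 s r = Real.sin (r * s / 2) - r * s / 2 := by
    simp only [aS, aS0]; ring
  have hsplit : Real.sin (r * s / 2) - r * s / 2
      = (Real.sin (r * s / 2) - (r * s / 2 - (r * s / 2) ^ 3 / 6)) + (-((r * s / 2) ^ 3 / 6)) := by
    ring
  have habs : |Real.sin (r * s / 2) - r * s / 2|
      ≤ |r * s / 2| ^ 4 * (5/96) + |r * s / 2| ^ 3 / 6 := by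
    rw [hsplit]
    refine (abs_add_le _ _).trans ?_
    have hn : |(-((r * s / 2) ^ 3 / 6))| = |r * s / 2| ^ 3 / 6 := by
      rw [abs_neg, abs_div, abs_pow]
      norm_num
    rw [hn]
    exact add_le_add (hsb.trans (by
      have h54 := pow_le_pow_of_le_one (abs_nonneg (r * s / 2)) hx1 (show 4 ≤ 5 by norm_num)
      nlinarith [pow_nonneg (abs_nonneg (r * s / 2)) 4])) le_rfl
  have h4 : |r * s / 2| ^ 4 ≤ |r * s / 2| ^ 3 :=
    pow_le_pow_of_le_one (abs_nonneg _) hx1 (by norm_num)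
  have h3n : (0:ℝ) ≤ |r * s / 2| ^ 3 := pow_nonneg (abs_nonneg _) 3
  rw [Real.norm_eq_abs, Real.norm_eq_abs, hvr]
  calc |Real.sin (r * s / 2) - r * s / 2| ≤ |r * s / 2| ^ 4 * (5/96) + |r * s / 2| ^ 3 / 6 := habs
    _ ≤ |r * s / 2| ^ 3 := by nlinarith
    _ = (s/2) ^ 3 * |r| ^ 3 := by rw [hxa]; ring
    _ = (s/2) ^ 3 * |r ^ 3| := by rw [abs_pow]

/- The difference `aEE - aEE0` is `O(r³)`. -/

lemma hdE (s l1 l2 β₁ β₂ : ℝ) (hs : 0 < s) :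
    (fun r => aEE s l1 l2 β₁ β₂ r - aEE0 s l1 l2 β₁ β₂ r) =O[nhds 0] (fun r : ℝ => r ^ 3) := by
  have hu := hu0 s hs
  have hv := hv0 s hs
  have hdff : ∀ a : ℝ, (fun r => aff s a r - aff0 s a r) =O[nhds 0] (fun r : ℝ => r ^ 3) := by
    intro a
    refine (hu.sub (hv.const_mul_left a)).congr_left fun r => ?_
    simp only [aff, aff0]; ring
  have hdKK : ∀ a : ℝ, (fun r => aKK s a r - aKK0 s a r) =O[nhds 0] (fun r : ℝ => r ^ 3) := by
    intro a
    refine ((hu.const_mul_left 2).sub (hv.const_mul_left a)).congr_left fun r => ?_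
    simp only [aKK, aKK0]; ring
  have hdu' : (fun r => (aC s r - 1) - (aC0 s r - 1)) =O[nhds 0] (fun r : ℝ => r ^ 3) :=
    hu.congr_left fun r => by ring
  have hdgg : ∀ a : ℝ, (fun r => agg s a r - agg0 s a r) =O[nhds 0] (fun r : ℝ => r ^ 3) := by
    intro a
    refine (mulO hdu' (hdKK a) (bigO_one_of_continuous (by fun_prop))
      (bigO_one_of_continuous (by fun_prop))).congr_left fun r => ?_
    simp only [agg, agg0]
  have hdLL : ∀ a : ℝ, (fun r => aLL s a r - aLL0 s a r) =O[nhds 0] (fun r : ℝ => r ^ 3) := by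
    intro a
    refine ((hv.const_mul_left (-s)).sub (hu.const_mul_left (a * (s/2)))).congr_left fun r => ?_
    simp only [aLL, aLL0]; ring
  have hdffd : ∀ a : ℝ, (fun r => affd s a r - affd0 s a r) =O[nhds 0] (fun r : ℝ => r ^ 3) := by
    intro a
    refine ((hv.const_mul_left (-(s/2))).sub (hu.const_mul_left (a * (s/2)))).congr_left fun r => ?_
    simp only [affd, affd0]; ring
  have hp1 : (fun r => (-(s/2) * aS s r) - (-(s/2) * aS0 s r)) =O[nhds 0] (fun r : ℝ => r ^ 3) :=
    (hv.const_mul_left (-(s/2))).congr_left fun r => by ring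
  have hdggd : ∀ a : ℝ, (fun r => aggd s a r - aggd0 s a r) =O[nhds 0] (fun r : ℝ => r ^ 3) := by
    intro a
    have t1 := mulO hp1 (hdKK a) (bigO_one_of_continuous (contKK s a))
      (bigO_one_of_continuous (by fun_prop))
    have t2 := mulO hdu' (hdLL a) (bigO_one_of_continuous (contLL s a))
      (bigO_one_of_continuous (by fun_prop))
    refine (t1.add t2).congr_left fun r => ?_
    simp only [aggd, aggd0]; ring
  have hdFF : (fun r => aFF s l1 l2 β₁ β₂ r - aFF0 s l1 l2 β₁ β₂ r)
      =O[nhds 0] (fun r : ℝ => r ^ 3) := by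
    have t1 := mulO (hdff (2*l1/s)) (hdff (2*l2/s))
      (bigO_one_of_continuous (contff s (2*l2/s))) (bigO_one_of_continuous (contff0 s (2*l1/s)))
    have t2 := mulO (hdff (2*l2/s)) (hdgg (2*l1/s))
      (bigO_one_of_continuous (contgg s (2*l1/s))) (bigO_one_of_continuous (contff0 s (2*l2/s)))
    have t3 := mulO (hdff (2*l1/s)) (hdgg (2*l2/s))
      (bigO_one_of_continuous (contgg s (2*l2/s))) (bigO_one_of_continuous (contff0 s (2*l1/s)))
    refine ((t1.add (t2.const_mul_left β₁)).add (t3.const_mul_left β₂)).congr_left fun r => ?_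
    simp only [aFF, aFF0]; ring
  have hdFFd : (fun r => aFFd s l1 l2 β₁ β₂ r - aFFd0 s l1 l2 β₁ β₂ r)
      =O[nhds 0] (fun r : ℝ => r ^ 3) := by
    have t1 := mulO (hdffd (2*l1/s)) (hdff (2*l2/s))
      (bigO_one_of_continuous (contff s (2*l2/s))) (bigO_one_of_continuous (contffd0 s (2*l1/s)))
    have t2 := mulO (hdff (2*l1/s)) (hdffd (2*l2/s))
      (bigO_one_of_continuous (contffd s (2*l2/s))) (bigO_one_of_continuous (contff0 s (2*l1/s)))
    have t3 := mulO (hdffd (2*l2/s)) (hdgg (2*l1/s))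
      (bigO_one_of_continuous (contgg s (2*l1/s))) (bigO_one_of_continuous (contffd0 s (2*l2/s)))
    have t4 := mulO (hdff (2*l2/s)) (hdggd (2*l1/s))
      (bigO_one_of_continuous (contggd s (2*l1/s))) (bigO_one_of_continuous (contff0 s (2*l2/s)))
    have t5 := mulO (hdffd (2*l1/s)) (hdgg (2*l2/s))
      (bigO_one_of_continuous (contgg s (2*l2/s))) (bigO_one_of_continuous (contffd0 s (2*l1/s)))
    have t6 := mulO (hdff (2*l1/s)) (hdggd (2*l2/s))
      (bigO_one_of_continuous (contggd s (2*l2/s))) (bigO_one_of_continuous (contff0 s (2*l1/s)))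
    refine (((t1.add t2).add ((t3.add t4).const_mul_left β₁)).add
      ((t5.add t6).const_mul_left β₂)).congr_left fun r => ?_
    simp only [aFFd, aFFd0]; ring
  have hzero : (fun r => aPP s l1 l2 β₁ β₂ r - aPP s l1 l2 β₁ β₂ r)
      =O[nhds 0] (fun r : ℝ => r ^ 3) :=
    (isBigO_zero _ _).congr_left fun r => by ring
  have hFP := mulO hdFF hzero (bigO_one_of_continuous (contPP s l1 l2 β₁ β₂))
    (bigO_one_of_continuous (contFF0 s l1 l2 β₁ β₂))
  refine (hdFFd.neg_left.sub (hFP.const_mul_left 2)).congr_left fun r => ?_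
  simp only [aEE, aEE0]; ring

/- The polynomial part. -/

set_option maxHeartbeats 2000000 in
lemma hE0eq (s l1 l2 β₁ : ℝ) (hs : s ≠ 0) (r : ℝ) :
    aEE0 s l1 l2 β₁ (1 - β₁) r = r ^ 3 * aQQ s l1 l2 β₁ r := by
  simp only [aEE0, aFF0, aFFd0, aff0, agg0, aKK0, aLL0, affd0, aggd0, aPP, aQQ, aC0, aS0]
  field_simp
  ring

/- The derivative of `aFF`. -/

lemma hFFd (s l1 l2 β₁ β₂ : ℝ) (r : ℝ) :
    HasDerivAt (aFF s l1 l2 β₁ β₂) (aFFd s l1 l2 β₁ β₂ r) r := by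
  have hx : HasDerivAt (fun t : ℝ => t * s / 2) (s / 2) r := by
    simpa using ((hasDerivAt_id r).mul_const s).div_const 2
  have hC : HasDerivAt (aC s) (-(s/2) * aS s r) r := by
    unfold aC aS
    convert hx.cos using 1
    ring
  have hS : HasDerivAt (aS s) (s/2 * aC s r) r := by
    unfold aC aS
    convert hx.sin using 1
    ring
  have hff : ∀ a : ℝ, HasDerivAt (aff s a) (affd s a r) r := fun a => by
    simp only [aff, affd]
    exact hC.sub (hS.const_mul a)
  have hgg : ∀ a : ℝ, HasDerivAt (agg s a) (aggd s a r) r := fun a => by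
    simp only [agg, aggd, aKK, aLL]
    exact (hC.sub_const 1).mul (((hC.const_mul 2).const_add 1).sub (hS.const_mul a))
  simp only [aFF, aFFd]
  exact (((hff (2*l1/s)).mul (hff (2*l2/s))).add
      (((hff (2*l2/s)).mul (hgg (2*l1/s))).const_mul β₁)).add
    (((hff (2*l1/s)).mul (hgg (2*l2/s))).const_mul β₂)

lemma hFF1 (s l1 l2 β₁ β₂ : ℝ) : aFF s l1 l2 β₁ β₂ 0 = 1 := by
  simp [aFF, aff, agg, aKK, aC, aS]

set_option maxHeartbeats 1000000 in
/-- For `c > 0`, principal curvatures `λ₁, λ₂` and coefficients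
`b₁, b₂` with `b₁² + b₂² = 1`, the radial Jacobian determinant
`D r = f_{λ₁} f_{λ₂} + b₁² f_{λ₂} g_{λ₁} + b₂² f_{λ₁} g_{λ₂}` satisfies `D 0 = 1`, and
the radial mean curvature `h r = -D'(r)/(2 D r)` has the stated second-order Taylor
expansion at `r = 0`, with remainder `O(r³)`. -/
theorem stmt_5 (c : ℝ) (hc : 0 < c) (lam₁ lam₂ b₁ b₂ : ℝ) (hb : b₁ ^ 2 + b₂ ^ 2 = 1)
    (f g : ℝ → ℝ → ℝ)
    (hf : ∀ lam t, f lam t = Real.cos (t * Real.sqrt c / 2)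
        - (2 * lam / Real.sqrt c) * Real.sin (t * Real.sqrt c / 2))
    (hg : ∀ lam t, g lam t = (Real.cos (t * Real.sqrt c / 2) - 1)
        * (1 + 2 * Real.cos (t * Real.sqrt c / 2)
          - (2 * lam / Real.sqrt c) * Real.sin (t * Real.sqrt c / 2)))
    (D : ℝ → ℝ)
    (hD : ∀ r, D r = f lam₁ r * f lam₂ r + b₁ ^ 2 * (f lam₂ r * g lam₁ r)
        + b₂ ^ 2 * (f lam₁ r * g lam₂ r))
    (h : ℝ → ℝ) (hh : ∀ r, h r = -(deriv D r) / (2 * D r)) :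
    D 0 = 1 ∧
    (fun r : ℝ => h r -
        ((lam₁ + lam₂) / 2
          + r / 2 * (5 * c / 4 + lam₁ ^ 2 + lam₂ ^ 2)
          + r ^ 2 / 8 * (c * (lam₁ + lam₂) + 4 * (lam₁ ^ 3 + lam₂ ^ 3)
              + 3 * c * (lam₁ * b₁ ^ 2 + lam₂ * b₂ ^ 2))))
      =O[nhds 0] (fun r : ℝ => r ^ 3) := by
  constructor
  · rw [hD, hf, hf, hg, hg]
    norm_num
  have hs : (0:ℝ) < Real.sqrt c := Real.sqrt_pos.2 hc
  have hs0 : Real.sqrt c ≠ 0 := ne_of_gt hs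
  have hc' : Real.sqrt c ^ 2 = c := Real.sq_sqrt hc.le
  have hb2 : b₂ ^ 2 = 1 - b₁ ^ 2 := by linarith
  have hDF : D = aFF (Real.sqrt c) lam₁ lam₂ (b₁ ^ 2) (b₂ ^ 2) := by
    funext r
    rw [hD, hf, hf, hg, hg]
    simp only [aFF, aff, agg, aKK, aC, aS]
    try ring
  -- `aEE0` is O(r³)
  have hQOb : aQQ (Real.sqrt c) lam₁ lam₂ (b₁ ^ 2) =O[nhds 0] (fun _ : ℝ => (1:ℝ)) :=
    bigO_one_of_continuous (contQQ _ _ _ _)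
  have hE0O : (fun r => aEE0 (Real.sqrt c) lam₁ lam₂ (b₁ ^ 2) (b₂ ^ 2) r)
      =O[nhds 0] (fun r : ℝ => r ^ 3) := by
    have hR : (fun r : ℝ => r ^ 3 * aQQ (Real.sqrt c) lam₁ lam₂ (b₁ ^ 2) r)
        =O[nhds 0] (fun r : ℝ => r ^ 3) := by
      simpa using (isBigO_refl (fun r : ℝ => r ^ 3) (nhds 0)).mul hQOb
    refine hR.congr_left fun r => ?_
    rw [hb2]
    exact (hE0eq (Real.sqrt c) lam₁ lam₂ (b₁ ^ 2) hs0 r).symm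
  -- hence `aEE` is O(r³)
  have hEO : (fun r => aEE (Real.sqrt c) lam₁ lam₂ (b₁ ^ 2) (b₂ ^ 2) r)
      =O[nhds 0] (fun r : ℝ => r ^ 3) := by
    refine (hE0O.add (hdE (Real.sqrt c) lam₁ lam₂ (b₁ ^ 2) (b₂ ^ 2) hs)).congr_left fun r => ?_
    ring
  -- nonvanishing of `aFF` near 0
  have hFcont : Continuous (aFF (Real.sqrt c) lam₁ lam₂ (b₁ ^ 2) (b₂ ^ 2)) := contFF _ _ _ _ _
  have hF0 : aFF (Real.sqrt c) lam₁ lam₂ (b₁ ^ 2) (b₂ ^ 2) 0 = 1 := hFF1 _ _ _ _ _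
  have hne : ∀ᶠ r in nhds (0:ℝ), aFF (Real.sqrt c) lam₁ lam₂ (b₁ ^ 2) (b₂ ^ 2) r ≠ 0 :=
    hFcont.continuousAt.eventually_ne (by rw [hF0]; norm_num)
  have hIO : (fun r : ℝ => (2 * aFF (Real.sqrt c) lam₁ lam₂ (b₁ ^ 2) (b₂ ^ 2) r)⁻¹)
      =O[nhds 0] (fun _ : ℝ => (1:ℝ)) := by
    have ht : Tendsto (fun r : ℝ => 2 * aFF (Real.sqrt c) lam₁ lam₂ (b₁ ^ 2) (b₂ ^ 2) r)
        (nhds 0) (nhds (2 * aFF (Real.sqrt c) lam₁ lam₂ (b₁ ^ 2) (b₂ ^ 2) 0)) :=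
      (continuous_const.mul hFcont).tendsto 0
    have ht2 := ht.inv₀ (by rw [hF0]; norm_num)
    exact ht2.isBigO_one ℝ
  have hmain := hEO.mul hIO
  refine hmain.congr' ?_ ?_
  · filter_upwards [hne] with r hr
    have hd : deriv D r = aFFd (Real.sqrt c) lam₁ lam₂ (b₁ ^ 2) (b₂ ^ 2) r := by
      rw [hDF]
      exact (hFFd (Real.sqrt c) lam₁ lam₂ (b₁ ^ 2) (b₂ ^ 2) r).deriv
    have h2 : (2:ℝ) * aFF (Real.sqrt c) lam₁ lam₂ (b₁ ^ 2) (b₂ ^ 2) r ≠ 0 :=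
      mul_ne_zero two_ne_zero hr
    have hPeq : aPP (Real.sqrt c) lam₁ lam₂ (b₁ ^ 2) (b₂ ^ 2) r
        = (lam₁ + lam₂) / 2
          + r / 2 * (5 * c / 4 + lam₁ ^ 2 + lam₂ ^ 2)
          + r ^ 2 / 8 * (c * (lam₁ + lam₂) + 4 * (lam₁ ^ 3 + lam₂ ^ 3)
              + 3 * c * (lam₁ * b₁ ^ 2 + lam₂ * b₂ ^ 2)) := by
      simp only [aPP]
      rw [hc']
    rw [hh r, hd, hDF, ← hPeq, ← div_eq_mul_inv, div_eq_iff h2, sub_mul,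
      div_mul_cancel₀ _ h2]
    simp only [aEE]
    ring
  · filter_upwards with r
    simp
end

section
/- In the setting of the Lie group model of ℂH²(c): the vectors U₁ = (√2·B + W)/√3 and U₂ = (V + √2·Z)/√3 are orthonormal, ⟨JU₁,U₁⟩ = ⟨JU₂,U₂⟩ = 0, ⟨JU₁,U₂⟩ = 1/3, and for every unit vector v ∈ 𝔥 = span{U₁,U₂}, the orthogonal projection of Jv onto 𝔥 has norm 1/3. In other words, 𝔥 has constant Kähler angle θ = arccos(1/3), so Chen's surface is a proper slant surface of ℂH² with slant angle arccos(1/3). -/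
open Real RealInnerProductSpace

/-- In the Lie group model of `ℂH²(c)` (the solvable group `AN` modeled
on a 4-dimensional real inner product space with orthonormal basis `(B, V, W, Z)` and
complex structure `J` with `JB = Z`, `JV = W`, `JW = -V`, `JZ = -B`), the vectors
`U₁ = (√2 B + W)/√3` and `U₂ = (V + √2 Z)/√3` are orthonormal,
`⟨JU₁,U₁⟩ = ⟨JU₂,U₂⟩ = 0`, `⟨JU₁,U₂⟩ = 1/3`, and for every unit `v ∈ 𝔥 = span{U₁,U₂}`
the orthogonal projection of `Jv` onto `𝔥` has norm `1/3`: the tangent plane of Chen's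
surface has constant Kähler angle `arccos(1/3)`. -/
theorem stmt_7 {E : Type*} [NormedAddCommGroup E] [InnerProductSpace ℝ E]
    [FiniteDimensional ℝ E] (hdim : Module.finrank ℝ E = 4)
    (c : ℝ) (hc : c < 0)
    (B V W Z : E) (honb : Orthonormal ℝ ![B, V, W, Z])
    (J : E →ₗ[ℝ] E)
    (hJB : J B = Z) (hJV : J V = W) (hJW : J W = -V) (hJZ : J Z = -B)
    (U₁ U₂ : E)
    (hU₁ : U₁ = (Real.sqrt 3)⁻¹ • (Real.sqrt 2 • B + W))
    (hU₂ : U₂ = (Real.sqrt 3)⁻¹ • (V + Real.sqrt 2 • Z)) :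
    Orthonormal ℝ ![U₁, U₂] ∧
    ⟪J U₁, U₁⟫ = 0 ∧ ⟪J U₂, U₂⟫ = 0 ∧ ⟪J U₁, U₂⟫ = 1 / 3 ∧
    ∀ v ∈ Submodule.span ℝ ({U₁, U₂} : Set E), ‖v‖ = 1 →
      ‖(Submodule.orthogonalProjectionOnto (Submodule.span ℝ ({U₁, U₂} : Set E)) (J v) : E)‖ = 1 / 3 := by
  have h2 : Real.sqrt 2 ^ 2 = 2 := Real.sq_sqrt (by norm_num)
  have h3 : Real.sqrt 3 ^ 2 = 3 := Real.sq_sqrt (by norm_num)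
  have h3ne : Real.sqrt 3 ≠ 0 := by positivity
  rw [orthonormal_iff_ite] at honb
  have hBB : ⟪B, B⟫ = 1 := by simpa using honb 0 0
  have hBV : ⟪B, V⟫ = 0 := by simpa using honb 0 1
  have hBW : ⟪B, W⟫ = 0 := by simpa using honb 0 2
  have hBZ : ⟪B, Z⟫ = 0 := by simpa using honb 0 3
  have hVB : ⟪V, B⟫ = 0 := by simpa using honb 1 0
  have hVV : ⟪V, V⟫ = 1 := by simpa using honb 1 1
  have hVW : ⟪V, W⟫ = 0 := by simpa using honb 1 2
  have hVZ : ⟪V, Z⟫ = 0 := by simpa using honb 1 3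
  have hWB : ⟪W, B⟫ = 0 := by simpa using honb 2 0
  have hWV : ⟪W, V⟫ = 0 := by simpa using honb 2 1
  have hWW : ⟪W, W⟫ = 1 := by simpa using honb 2 2
  have hWZ : ⟪W, Z⟫ = 0 := by simpa using honb 2 3
  have hZB : ⟪Z, B⟫ = 0 := by simpa using honb 3 0
  have hZV : ⟪Z, V⟫ = 0 := by simpa using honb 3 1
  have hZW : ⟪Z, W⟫ = 0 := by simpa using honb 3 2
  have hZZ : ⟪Z, Z⟫ = 1 := by simpa using honb 3 3
  have hJU₁ : J U₁ = (Real.sqrt 3)⁻¹ • (Real.sqrt 2 • Z + (-V)) := by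
    simp [hU₁, hJB, hJW]
  have hJU₂ : J U₂ = (Real.sqrt 3)⁻¹ • (W + Real.sqrt 2 • (-B)) := by
    simp [hU₂, hJV, hJZ]
  have i11 : ⟪U₁, U₁⟫ = 1 := by
    simp only [hU₁, inner_add_left, inner_add_right, inner_smul_left, inner_smul_right,
      conj_trivial, hBB, hBW, hWB, hWW]
    field_simp
    ring_nf
    linarith [h2, h3]
  have i22 : ⟪U₂, U₂⟫ = 1 := by
    simp only [hU₂, inner_add_left, inner_add_right, inner_smul_left, inner_smul_right,
      conj_trivial, hVV, hVZ, hZV, hZZ]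
    field_simp
    ring_nf
    linarith [h2, h3]
  have i12 : ⟪U₁, U₂⟫ = 0 := by
    simp only [hU₁, hU₂, inner_add_left, inner_add_right, inner_smul_left, inner_smul_right,
      conj_trivial, hBV, hBZ, hWV, hWZ]
    ring
  have i21 : ⟪U₂, U₁⟫ = 0 := by rw [real_inner_comm]; exact i12
  have j11 : ⟪J U₁, U₁⟫ = 0 := by
    rw [hJU₁, hU₁]
    simp only [ inner_add_left, inner_add_right, inner_smul_left, inner_smul_right,
      inner_neg_left, conj_trivial, hZB, hZW, hVB, hVW]
    ring
  have j22 : ⟪J U₂, U₂⟫ = 0 := by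
    rw [hJU₂, hU₂]
    simp only [ inner_add_left, inner_add_right, inner_smul_left, inner_smul_right,
      inner_neg_left, conj_trivial, hWV, hWZ, hBV, hBZ]
    ring
  have j12 : ⟪J U₁, U₂⟫ = 1 / 3 := by
    rw [hJU₁, hU₂]
    simp only [ inner_add_left, inner_add_right, inner_smul_left, inner_smul_right,
      inner_neg_left, conj_trivial, hZV, hZZ, hVV, hVZ]
    field_simp
    ring_nf
    linarith [h2, h3]
  have j21 : ⟪J U₂, U₁⟫ = -(1 / 3) := by
    rw [hJU₂, hU₁]
    simp only [ inner_add_left, inner_add_right, inner_smul_left, inner_smul_right,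
      inner_neg_left, conj_trivial, hWB, hWW, hBB, hBW]
    field_simp
    ring_nf
    linarith [h2, h3]
  refine ⟨?_, j11, j22, j12, ?_⟩
  · rw [orthonormal_iff_ite]
    intro i j
    have n1 : ‖U₁‖ = 1 := by rw [norm_eq_sqrt_real_inner, i11, Real.sqrt_one]
    have n2 : ‖U₂‖ = 1 := by rw [norm_eq_sqrt_real_inner, i22, Real.sqrt_one]
    fin_cases i <;> fin_cases j <;>
      simp [i11, i12, i21, i22, n1, n2]
  · intro v hv hv1
    obtain ⟨a, b, hab⟩ := Submodule.mem_span_pair.mp hv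
    have hab2 : a ^ 2 + b ^ 2 = 1 := by
      have : ⟪v, v⟫ = 1 := by
        rw [real_inner_self_eq_norm_sq, hv1]; norm_num
      rw [← hab] at this
      simp only [inner_add_left, inner_add_right, inner_smul_left, inner_smul_right,
        conj_trivial, i11, i12, i21, i22] at this
      linear_combination this
    set K := Submodule.span ℝ ({U₁, U₂} : Set E)
    have hp : (Submodule.orthogonalProjectionOnto K (J v) : E) = (-(b / 3)) • U₁ + (a / 3) • U₂ := by
      apply Submodule.eq_starProjection_of_mem_of_inner_eq_zero
      · exact Submodule.mem_span_pair.mpr ⟨-(b / 3), a / 3, rfl⟩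
      · intro w hw
        obtain ⟨m, n, hmn⟩ := Submodule.mem_span_pair.mp hw
        have hJv : J v = a • J U₁ + b • J U₂ := by rw [← hab]; simp
        rw [← hmn, hJv]
        simp only [inner_sub_left, inner_add_left, inner_add_right, inner_smul_left,
          inner_smul_right, inner_neg_left, conj_trivial, j11, j12, j21, j22,
          i11, i12, i21, i22]
        ring
    rw [hp]
    have hn2 : ‖(-(b / 3)) • U₁ + (a / 3) • U₂‖ ^ 2 = (1 / 3) ^ 2 := by
      rw [← real_inner_self_eq_norm_sq]
      simp only [inner_add_left, inner_add_right, inner_smul_left, inner_smul_right,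
        inner_neg_left, inner_neg_right, conj_trivial, i11, i12, i21, i22]
      linear_combination (1/9 : ℝ) * hab2
    rw [← Real.sqrt_sq (norm_nonneg _), hn2, Real.sqrt_sq (by norm_num)]
end

section
/- In the Lie group model of ℂH²(c) with connection ∇ as given, the bracket [X,Y] := ∇_X Y - ∇_Y X satisfies [U₁,U₂] = (√(-6c)/6)·U₂. In particular, 𝔥 = span{U₁,U₂} is a 2-dimensional (solvable) Lie subalgebra of 𝔞 ⊕ 𝔫 = ℝ⁴, so that the orbit of the corresponding connected subgroup H through the origin is a homogeneous surface of ℂH²(c) (Chen's surface). -/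
set_option maxHeartbeats 1000000


open Real RealInnerProductSpace

/-- In the Lie group model of `ℂH²(c)` (orthonormal basis `(B, V, W, Z)`,
complex structure `J`, and the left-invariant Levi-Civita connection `∇` given by the
standard formula), the bracket `[X,Y] = ∇_X Y - ∇_Y X` satisfies
`[U₁,U₂] = (√(-6c)/6) U₂`, where `U₁ = (√2 B + W)/√3` and `U₂ = (V + √2 Z)/√3`; in
particular `𝔥 = span{U₁,U₂}` is a 2-dimensional Lie subalgebra of `𝔞 ⊕ 𝔫`, so the orbit
of the corresponding connected subgroup through the origin is a homogeneous surface
(Chen's surface). -/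
theorem stmt_8 {E : Type*} [NormedAddCommGroup E] [InnerProductSpace ℝ E]
    [FiniteDimensional ℝ E] (hdim : Module.finrank ℝ E = 4)
    (c : ℝ) (hc : c < 0)
    (B V W Z : E) (honb : Orthonormal ℝ ![B, V, W, Z])
    (J : E →ₗ[ℝ] E)
    (hJB : J B = Z) (hJV : J V = W) (hJW : J W = -V) (hJZ : J Z = -B)
    (nabla : E →ₗ[ℝ] E →ₗ[ℝ] E)
    (hnabla : ∀ a b x y u₁ u₂ v₁ v₂ : ℝ,
      nabla (a • B + (u₁ • V + u₂ • W) + x • Z) (b • B + (v₁ • V + v₂ • W) + y • Z)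
        = Real.sqrt (-c) •
          ((x * y + (1 / 2) * ⟪u₁ • V + u₂ • W, v₁ • V + v₂ • W⟫) • B
            - (1 / 2 : ℝ) • (b • (u₁ • V + u₂ • W) + y • J (u₁ • V + u₂ • W)
                + x • J (v₁ • V + v₂ • W))
            + (-(b * x) + (1 / 2) * ⟪J (u₁ • V + u₂ • W), v₁ • V + v₂ • W⟫) • Z))
    (U₁ U₂ : E)
    (hU₁ : U₁ = (Real.sqrt 3)⁻¹ • (Real.sqrt 2 • B + W))
    (hU₂ : U₂ = (Real.sqrt 3)⁻¹ • (V + Real.sqrt 2 • Z)) :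
    nabla U₁ U₂ - nabla U₂ U₁ = (Real.sqrt (-(6 * c)) / 6) • U₂ ∧
    nabla U₁ U₂ - nabla U₂ U₁ ∈ Submodule.span ℝ ({U₁, U₂} : Set E) := by

  have h2 : Real.sqrt 2 * Real.sqrt 2 = 2 := Real.mul_self_sqrt (by norm_num)
  have h3 : Real.sqrt 3 * Real.sqrt 3 = 3 := Real.mul_self_sqrt (by norm_num)
  have h3ne : Real.sqrt 3 ≠ 0 := by positivity
  have h6 : Real.sqrt (-(6 * c)) = Real.sqrt 2 * Real.sqrt 3 * Real.sqrt (-c) := by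
    rw [show -(6 * c) = 2 * 3 * (-c) by ring,
      Real.sqrt_mul (by positivity), Real.sqrt_mul (by norm_num)]
  have key := orthonormal_iff_ite.mp honb
  have hVV : ⟪V, V⟫ = (1 : ℝ) := by simpa using key 1 1
  have hVW : ⟪V, W⟫ = (0 : ℝ) := by simpa using key 1 2
  have hWV : ⟪W, V⟫ = (0 : ℝ) := by simpa using key 2 1
  have hWW : ⟪W, W⟫ = (1 : ℝ) := by simpa using key 2 2
  have e1 : U₁ = (Real.sqrt 2 * (Real.sqrt 3)⁻¹) • B
      + ((0 : ℝ) • V + (Real.sqrt 3)⁻¹ • W) + (0 : ℝ) • Z := by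
    rw [hU₁]; module
  have e2 : U₂ = (0 : ℝ) • B + ((Real.sqrt 3)⁻¹ • V + (0 : ℝ) • W)
      + (Real.sqrt 2 * (Real.sqrt 3)⁻¹) • Z := by
    rw [hU₂]; module
  have h12 := hnabla (Real.sqrt 2 * (Real.sqrt 3)⁻¹) 0 0 (Real.sqrt 2 * (Real.sqrt 3)⁻¹)
    0 ((Real.sqrt 3)⁻¹) ((Real.sqrt 3)⁻¹) 0
  have h21 := hnabla 0 (Real.sqrt 2 * (Real.sqrt 3)⁻¹) (Real.sqrt 2 * (Real.sqrt 3)⁻¹) 0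
    ((Real.sqrt 3)⁻¹) 0 0 ((Real.sqrt 3)⁻¹)
  rw [← e1, ← e2] at h12 h21
  have main : nabla U₁ U₂ - nabla U₂ U₁ = (Real.sqrt (-(6 * c)) / 6) • U₂ := by
    rw [h12, h21, hU₂, h6]
    simp only [map_add, map_smul, hJV, hJW, hJB, hJZ, inner_add_left, inner_add_right,
      real_inner_smul_left, real_inner_smul_right, hVV, hVW, hWV, hWW, smul_neg,
      inner_neg_left, inner_neg_right, smul_zero, zero_smul, smul_add, smul_smul,
      inner_zero_left, inner_zero_right, map_zero]
    match_scalars <;> field_simp <;> (try simp only [Real.sq_sqrt (show (0:ℝ) ≤ 2 by norm_num)]) <;> (try ring) <;>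
      (simp only [Real.sq_sqrt (show (0:ℝ) ≤ 3 by norm_num), Real.sq_sqrt (show (0:ℝ) ≤ 2 by norm_num)]; ring)
  refine ⟨main, ?_⟩
  rw [main]
  exact Submodule.smul_mem _ _ (Submodule.subset_span (by simp))
end

section
/- In the Lie group model of ℂH²(c), let P⊥ denote the orthogonal projection of ℝ⁴ onto the orthogonal complement of 𝔥 = span{U₁,U₂}, and define the second fundamental form II(X,Y) := P⊥(∇_X Y) for X, Y ∈ 𝔥 and the mean curvature vector H := ½·(II(U₁,U₁) + II(U₂,U₂)). Then H = (√(-c)/3)·(B - √2·W) and ⟨H,H⟩ = -c/3; in particular ⟨H,H⟩ = 2K - c·(1 + 3·cos²θ)/2 holds with K = c/6 and cos θ = 1/3, which is the defining identity of Chen's proper slant surface. -/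
open Real RealInnerProductSpace

/-- In the Lie group model of `ℂH²(c)`, with `II(X,Y) = P⊥(∇_X Y)` the
second fundamental form of Chen's surface (`P⊥` the orthogonal projection onto the
orthogonal complement of `𝔥 = span{U₁,U₂}`) and mean curvature vector
`H = ½(II(U₁,U₁) + II(U₂,U₂))`, one has `H = (√(-c)/3)(B - √2 W)` and `⟨H,H⟩ = -c/3`;
in particular `⟨H,H⟩ = 2K - c(1 + 3cos²θ)/2` with `K = c/6` and `cos θ = 1/3`, the
defining identity of Chen's proper slant surface. -/
theorem stmt_9 {E : Type*} [NormedAddCommGroup E] [InnerProductSpace ℝ E]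
    [FiniteDimensional ℝ E] (hdim : Module.finrank ℝ E = 4)
    (c : ℝ) (hc : c < 0)
    (B V W Z : E) (honb : Orthonormal ℝ ![B, V, W, Z])
    (J : E →ₗ[ℝ] E)
    (hJB : J B = Z) (hJV : J V = W) (hJW : J W = -V) (hJZ : J Z = -B)
    (nabla : E →ₗ[ℝ] E →ₗ[ℝ] E)
    (hnabla : ∀ a b x y u₁ u₂ v₁ v₂ : ℝ,
      nabla (a • B + (u₁ • V + u₂ • W) + x • Z) (b • B + (v₁ • V + v₂ • W) + y • Z)
        = Real.sqrt (-c) •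
          ((x * y + (1 / 2) * ⟪u₁ • V + u₂ • W, v₁ • V + v₂ • W⟫) • B
            - (1 / 2 : ℝ) • (b • (u₁ • V + u₂ • W) + y • J (u₁ • V + u₂ • W)
                + x • J (v₁ • V + v₂ • W))
            + (-(b * x) + (1 / 2) * ⟪J (u₁ • V + u₂ • W), v₁ • V + v₂ • W⟫) • Z))
    (U₁ U₂ : E)
    (hU₁ : U₁ = (Real.sqrt 3)⁻¹ • (Real.sqrt 2 • B + W))
    (hU₂ : U₂ = (Real.sqrt 3)⁻¹ • (V + Real.sqrt 2 • Z))
    (II : E → E → E)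
    (hII : ∀ X Y : E, II X Y =
      (Submodule.orthogonalProjection (Submodule.span ℝ ({U₁, U₂} : Set E))ᗮ (nabla X Y) : E))
    (H : E) (hH : H = (1 / 2 : ℝ) • (II U₁ U₁ + II U₂ U₂)) :
    H = (Real.sqrt (-c) / 3) • (B - Real.sqrt 2 • W) ∧
    ⟪H, H⟫ = -c / 3 ∧
    ⟪H, H⟫ = 2 * (c / 6) - c * (1 + 3 * (1 / 3 : ℝ) ^ 2) / 2 := by
  have h2 : Real.sqrt 2 * Real.sqrt 2 = 2 := Real.mul_self_sqrt (by norm_num)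
  have h3 : Real.sqrt 3 * Real.sqrt 3 = 3 := Real.mul_self_sqrt (by norm_num)
  have h3ne : Real.sqrt 3 ≠ 0 := by positivity
  have h3i : (Real.sqrt 3)⁻¹ * (Real.sqrt 3)⁻¹ = 1 / 3 := by
    rw [← mul_inv, h3]; norm_num
  set s := Real.sqrt (-c) with hsdef
  have hs : s * s = -c := Real.mul_self_sqrt (by linarith)
  rw [orthonormal_iff_ite] at honb
  have hBB : ⟪B, B⟫ = (1:ℝ) := by simpa using honb 0 0
  have hBV : ⟪B, V⟫ = (0:ℝ) := by simpa using honb 0 1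
  have hBW : ⟪B, W⟫ = (0:ℝ) := by simpa using honb 0 2
  have hBZ : ⟪B, Z⟫ = (0:ℝ) := by simpa using honb 0 3
  have hVB : ⟪V, B⟫ = (0:ℝ) := by simpa using honb 1 0
  have hVV : ⟪V, V⟫ = (1:ℝ) := by simpa using honb 1 1
  have hVW : ⟪V, W⟫ = (0:ℝ) := by simpa using honb 1 2
  have hVZ : ⟪V, Z⟫ = (0:ℝ) := by simpa using honb 1 3
  have hWB : ⟪W, B⟫ = (0:ℝ) := by simpa using honb 2 0
  have hWV : ⟪W, V⟫ = (0:ℝ) := by simpa using honb 2 1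
  have hWW : ⟪W, W⟫ = (1:ℝ) := by simpa using honb 2 2
  have hWZ : ⟪W, Z⟫ = (0:ℝ) := by simpa using honb 2 3
  have hZB : ⟪Z, B⟫ = (0:ℝ) := by simpa using honb 3 0
  have hZV : ⟪Z, V⟫ = (0:ℝ) := by simpa using honb 3 1
  have hZW : ⟪Z, W⟫ = (0:ℝ) := by simpa using honb 3 2
  have hZZ : ⟪Z, Z⟫ = (1:ℝ) := by simpa using honb 3 3
  have e1 : U₁ = ((Real.sqrt 3)⁻¹ * Real.sqrt 2) • B
      + ((0:ℝ) • V + (Real.sqrt 3)⁻¹ • W) + (0:ℝ) • Z := by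
    rw [hU₁]; module
  have e2 : U₂ = (0:ℝ) • B + ((Real.sqrt 3)⁻¹ • V + (0:ℝ) • W)
      + ((Real.sqrt 3)⁻¹ * Real.sqrt 2) • Z := by
    rw [hU₂]; module
  have hn1 : nabla U₁ U₁ = (s * (1/6)) • B - (s * (Real.sqrt 2 / 6)) • W := by
    rw [e1, hnabla]
    simp only [map_add, map_smul, hJV, hJW, zero_smul, smul_zero, add_zero, zero_add,
      smul_neg, inner_add_left, inner_add_right, real_inner_smul_left,
      real_inner_smul_right, inner_neg_left, inner_neg_right,
      hVV, hVW, hWV, hWW]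
    match_scalars
    all_goals first
      | ring1
      | linear_combination (s / 2) * h3i
      | linear_combination (s * Real.sqrt 2 / 2) * h3i
      | linear_combination (-(s * Real.sqrt 2) / 2) * h3i
      | linear_combination (-(s * Real.sqrt 2)) * h3i
      | linear_combination (s * (Real.sqrt 2 * Real.sqrt 2) + s / 2) * h3i + (s / 3) * h2
      | linear_combination (s * Real.sqrt 2) * h3i
  have hn2 : nabla U₂ U₂ = (s * (5/6)) • B - (s * (Real.sqrt 2 / 3)) • W := by
    rw [e2, hnabla]
    simp only [map_add, map_smul, hJV, hJW, zero_smul, smul_zero, add_zero, zero_add,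
      smul_neg, inner_add_left, inner_add_right, real_inner_smul_left,
      real_inner_smul_right, inner_neg_left, inner_neg_right,
      hVV, hVW, hWV, hWW]
    match_scalars
    all_goals first
      | ring1
      | linear_combination (s / 2) * h3i
      | linear_combination (s * Real.sqrt 2 / 2) * h3i
      | linear_combination (-(s * Real.sqrt 2) / 2) * h3i
      | linear_combination (-(s * Real.sqrt 2)) * h3i
      | linear_combination (s * (Real.sqrt 2 * Real.sqrt 2) + s / 2) * h3i + (s / 3) * h2
      | linear_combination (s * Real.sqrt 2) * h3i
  set 𝔥 := Submodule.span ℝ ({U₁, U₂} : Set E) with h𝔥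
  have mem_orth : ∀ q : E, ⟪U₁, q⟫ = 0 → ⟪U₂, q⟫ = 0 → q ∈ 𝔥ᗮ := by
    intro q hq1 hq2
    rw [Submodule.mem_orthogonal]
    intro u hu
    induction hu using Submodule.span_induction with
    | mem x hx =>
      simp only [Set.mem_insert_iff, Set.mem_singleton_iff] at hx
      rcases hx with rfl | rfl <;> assumption
    | zero => simp
    | add x y _ _ hx hy => rw [inner_add_left, hx, hy, add_zero]
    | smul a x _ hx => rw [real_inner_smul_left, hx, mul_zero]
  have hq1mem : nabla U₁ U₁ ∈ 𝔥ᗮ := by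
    refine mem_orth _ ?_ ?_ <;>
      rw [hn1] <;>
      simp only [hU₁, hU₂, inner_add_left, inner_add_right, inner_sub_right,
        real_inner_smul_left, real_inner_smul_right,
        hBB, hBV, hBW, hBZ, hVB, hVV, hVW, hVZ, hWB, hWV, hWW, hWZ, hZB, hZV, hZW, hZZ] <;>
      ring
  have hII1 : II U₁ U₁ = nabla U₁ U₁ := by
    rw [hII]
    exact Submodule.starProjection_eq_self_iff.mpr hq1mem
  have hp2 : ((s * Real.sqrt 2 * Real.sqrt 3 / 6) • U₁ : E)
      = (s * (1/3)) • B + (s * (Real.sqrt 2 / 6)) • W := by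
    rw [hU₁]
    match_scalars
    all_goals first
      | ring1
      | linear_combination (s * Real.sqrt 3 * (Real.sqrt 3)⁻¹ / 6) * h2 + (s / 3) * mul_inv_cancel₀ h3ne
      | linear_combination (s * Real.sqrt 2 / 6) * mul_inv_cancel₀ h3ne
  have hsplit : nabla U₂ U₂ = (s * Real.sqrt 2 * Real.sqrt 3 / 6) • U₁
      + ((s * (1/2)) • B - (s * (Real.sqrt 2 / 2)) • W) := by
    rw [hn2, hp2]; module
  have hqmem : ((s * (1/2)) • B - (s * (Real.sqrt 2 / 2)) • W) ∈ 𝔥ᗮ := by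
    refine mem_orth _ ?_ ?_ <;>
      simp only [hU₁, hU₂, inner_add_left, inner_add_right, inner_sub_right,
        real_inner_smul_left, real_inner_smul_right,
        hBB, hBV, hBW, hBZ, hVB, hVV, hVW, hVZ, hWB, hWV, hWW, hWZ, hZB, hZV, hZW, hZZ] <;>
      ring
  have hpmem : ((s * Real.sqrt 2 * Real.sqrt 3 / 6) • U₁ : E) ∈ 𝔥ᗮᗮ :=
    Submodule.le_orthogonal_orthogonal 𝔥
      (Submodule.smul_mem _ _ (Submodule.subset_span (by simp)))
  have hII2 : II U₂ U₂ = (s * (1/2)) • B - (s * (Real.sqrt 2 / 2)) • W := by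
    rw [hII, hsplit, map_add, Submodule.orthogonalProjectionOnto_apply_of_mem_orthogonal hpmem,
      zero_add]; exact Submodule.starProjection_eq_self_iff.mpr hqmem
  have hHval : H = (s / 3) • B - (s * Real.sqrt 2 / 3) • W := by
    rw [hH, hII1, hn1, hII2]; module
  have hinner : ⟪H, H⟫ = -c / 3 := by
    rw [hHval]
    simp only [inner_sub_left, inner_sub_right, real_inner_smul_left, real_inner_smul_right,
      hBB, hBW, hWB, hWW]
    linear_combination (s * s / 9) * h2 + (1 / 3) * hs
  refine ⟨?_, hinner, by rw [hinner]; ring⟩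
  rw [hHval]; module
end

section
/- In the Lie group model of ℂH²(c), let P⊥ denote the orthogonal projection of ℝ⁴ onto the orthogonal complement of 𝔥 = span{U₁,U₂}, define II(X,Y) := P⊥(∇_X Y) for X, Y ∈ 𝔥, and define the ambient curvature tensor R̄(X,Y)Z := (c/4)·( ⟨Y,Z⟩X - ⟨X,Z⟩Y + ⟨JY,Z⟩JX - ⟨JX,Z⟩JY - 2⟨JX,Y⟩JZ ). Then the Gaussian curvature of Chen's surface, computed by the Gauss equation as K := ⟨R̄(U₁,U₂)U₂, U₁⟩ + ⟨II(U₁,U₁), II(U₂,U₂)⟩ - ⟨II(U₁,U₂), II(U₁,U₂)⟩, equals c/6. -/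
open Real RealInnerProductSpace

lemma chen_inner_combo {E : Type*} [NormedAddCommGroup E] [InnerProductSpace ℝ E]
    {B V W Z : E} (honb : Orthonormal ℝ ![B, V, W, Z])
    (a b c d a' b' c' d' : ℝ) :
    ⟪a • B + b • V + c • W + d • Z, a' • B + b' • V + c' • W + d' • Z⟫
      = a * a' + b * b' + c * c' + d * d' := by
  have h := orthonormal_iff_ite.mp honb
  have hBB : ⟪B, B⟫ = 1 := by simpa using h 0 0
  have hBV : ⟪B, V⟫ = 0 := by simpa using h 0 1
  have hBW : ⟪B, W⟫ = 0 := by simpa using h 0 2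
  have hBZ : ⟪B, Z⟫ = 0 := by simpa using h 0 3
  have hVB : ⟪V, B⟫ = 0 := by simpa using h 1 0
  have hVV : ⟪V, V⟫ = 1 := by simpa using h 1 1
  have hVW : ⟪V, W⟫ = 0 := by simpa using h 1 2
  have hVZ : ⟪V, Z⟫ = 0 := by simpa using h 1 3
  have hWB : ⟪W, B⟫ = 0 := by simpa using h 2 0
  have hWV : ⟪W, V⟫ = 0 := by simpa using h 2 1
  have hWW : ⟪W, W⟫ = 1 := by simpa using h 2 2
  have hWZ : ⟪W, Z⟫ = 0 := by simpa using h 2 3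
  have hZB : ⟪Z, B⟫ = 0 := by simpa using h 3 0
  have hZV : ⟪Z, V⟫ = 0 := by simpa using h 3 1
  have hZW : ⟪Z, W⟫ = 0 := by simpa using h 3 2
  have hZZ : ⟪Z, Z⟫ = 1 := by simpa using h 3 3
  simp only [inner_add_left, inner_add_right, real_inner_smul_left, real_inner_smul_right,
    hBB, hBV, hBW, hBZ, hVB, hVV, hVW, hVZ, hWB, hWV, hWW, hWZ, hZB, hZV, hZW, hZZ]
  ring

lemma chen_mem_orth_pair {E : Type*} [NormedAddCommGroup E] [InnerProductSpace ℝ E]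
    {u₁ u₂ v : E} (h1 : ⟪u₁, v⟫ = 0) (h2 : ⟪u₂, v⟫ = 0) :
    v ∈ (Submodule.span ℝ ({u₁, u₂} : Set E))ᗮ := by
  rw [Submodule.mem_orthogonal]
  intro u hu
  induction hu using Submodule.span_induction with
  | mem x hx => rcases hx with rfl | rfl <;> assumption
  | zero => simp
  | add x y _ _ hx hy => rw [inner_add_left, hx, hy, add_zero]
  | smul t x _ hx => rw [real_inner_smul_left, hx, mul_zero]

/-- In the Lie group model of `ℂH²(c)`, with `II(X,Y) = P⊥(∇_X Y)` the
second fundamental form of Chen's surface and `R̄` the curvature tensor of the complex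
space form of constant holomorphic sectional curvature `c`, the Gaussian curvature of
Chen's surface computed via the Gauss equation,
`K = ⟨R̄(U₁,U₂)U₂, U₁⟩ + ⟨II(U₁,U₁), II(U₂,U₂)⟩ - ⟨II(U₁,U₂), II(U₁,U₂)⟩`,
equals `c/6`. -/
theorem stmt_10 {E : Type*} [NormedAddCommGroup E] [InnerProductSpace ℝ E]
    [FiniteDimensional ℝ E] (hdim : Module.finrank ℝ E = 4)
    (c : ℝ) (hc : c < 0)
    (B V W Z : E) (honb : Orthonormal ℝ ![B, V, W, Z])
    (J : E →ₗ[ℝ] E)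
    (hJB : J B = Z) (hJV : J V = W) (hJW : J W = -V) (hJZ : J Z = -B)
    (nabla : E →ₗ[ℝ] E →ₗ[ℝ] E)
    (hnabla : ∀ a b x y u₁ u₂ v₁ v₂ : ℝ,
      nabla (a • B + (u₁ • V + u₂ • W) + x • Z) (b • B + (v₁ • V + v₂ • W) + y • Z)
        = Real.sqrt (-c) •
          ((x * y + (1 / 2) * ⟪u₁ • V + u₂ • W, v₁ • V + v₂ • W⟫) • B
            - (1 / 2 : ℝ) • (b • (u₁ • V + u₂ • W) + y • J (u₁ • V + u₂ • W)
                + x • J (v₁ • V + v₂ • W))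
            + (-(b * x) + (1 / 2) * ⟪J (u₁ • V + u₂ • W), v₁ • V + v₂ • W⟫) • Z))
    (U₁ U₂ : E)
    (hU₁ : U₁ = (Real.sqrt 3)⁻¹ • (Real.sqrt 2 • B + W))
    (hU₂ : U₂ = (Real.sqrt 3)⁻¹ • (V + Real.sqrt 2 • Z))
    (II : E → E → E)
    (hII : ∀ X Y : E, II X Y =
      (Submodule.orthogonalProjection (Submodule.span ℝ ({U₁, U₂} : Set E))ᗮ (nabla X Y) : E))
    (Rbar : E → E → E → E)
    (hRbar : ∀ X Y Z' : E, Rbar X Y Z' = (c / 4) •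
      (⟪Y, Z'⟫ • X - ⟪X, Z'⟫ • Y + ⟪J Y, Z'⟫ • J X - ⟪J X, Z'⟫ • J Y
        - (2 * ⟪J X, Y⟫) • J Z'))
    (K : ℝ)
    (hK : K = ⟪Rbar U₁ U₂ U₂, U₁⟫ + ⟪II U₁ U₁, II U₂ U₂⟫ - ⟪II U₁ U₂, II U₁ U₂⟫) :
    K = c / 6 := by
  set s := Real.sqrt (-c) with hs_def
  set q := (Real.sqrt 3)⁻¹ with hq_def
  set r2 := Real.sqrt 2 with hr2_def
  have hs : s * s = -c := Real.mul_self_sqrt (by linarith)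
  have hr2 : r2 * r2 = 2 := Real.mul_self_sqrt (by norm_num)
  have hq : q * q = 1 / 3 := by
    rw [hq_def, ← mul_inv, Real.mul_self_sqrt (by norm_num : (0:ℝ) ≤ 3)]
    norm_num
  clear_value s q r2
  have hq2 : q ^ 2 = 1 / 3 := by rw [sq]; exact hq
  have hr22 : r2 ^ 2 = 2 := by rw [sq]; exact hr2
  have hs2 : s ^ 2 = -c := by rw [sq]; exact hs
  -- canonical coordinate forms
  have hU1c : U₁ = (r2 * q) • B + (0:ℝ) • V + q • W + (0:ℝ) • Z := by rw [hU₁]; module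
  have hU2c : U₂ = (0:ℝ) • B + q • V + (0:ℝ) • W + (r2 * q) • Z := by rw [hU₂]; module
  have hJU1 : J U₁ = (0:ℝ) • B + (-q) • V + (0:ℝ) • W + (r2 * q) • Z := by
    rw [hU1c]; simp only [map_add, map_smul, hJB, hJV, hJW, hJZ]; module
  have hJU2 : J U₂ = (-(r2 * q)) • B + (0:ℝ) • V + q • W + (0:ℝ) • Z := by
    rw [hU2c]; simp only [map_add, map_smul, hJB, hJV, hJW, hJZ]; module
  -- inner product values
  have i11 : ⟪U₁, U₁⟫ = 1 := by
    rw [hU1c, chen_inner_combo honb]; first | ring1 | (ring_nf; simp only [hq2, hr22, hs2]; try ring1; try norm_num)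
  have i22 : ⟪U₂, U₂⟫ = 1 := by
    rw [hU2c, chen_inner_combo honb]; first | ring1 | (ring_nf; simp only [hq2, hr22, hs2]; try ring1; try norm_num)
  have i12 : ⟪U₁, U₂⟫ = 0 := by
    rw [hU1c, hU2c, chen_inner_combo honb]; ring
  have i21 : ⟪U₂, U₁⟫ = 0 := by
    rw [hU1c, hU2c, chen_inner_combo honb]; ring
  have iJ1U1 : ⟪J U₁, U₁⟫ = 0 := by
    rw [hJU1, hU1c, chen_inner_combo honb]; ring
  have iJ1U2 : ⟪J U₁, U₂⟫ = 1 / 3 := by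
    rw [hJU1, hU2c, chen_inner_combo honb]; first | ring1 | (ring_nf; simp only [hq2, hr22, hs2]; try ring1; try norm_num)
  have iJ2U1 : ⟪J U₂, U₁⟫ = -(1 / 3) := by
    rw [hJU2, hU1c, chen_inner_combo honb]; first | ring1 | (ring_nf; simp only [hq2, hr22, hs2]; try ring1; try norm_num)
  have iJ2U2 : ⟪J U₂, U₂⟫ = 0 := by
    rw [hJU2, hU2c, chen_inner_combo honb]; ring
  -- the curvature term
  have hR : ⟪Rbar U₁ U₂ U₂, U₁⟫ = c / 3 := by
    rw [hRbar]
    simp only [real_inner_smul_left, inner_sub_left, inner_add_left,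
      i11, i21, i22, i12, iJ1U1, iJ1U2, iJ2U1, iJ2U2]
    ring
  -- shapes for hnabla
  have hU1s : U₁ = (r2 * q) • B + ((0:ℝ) • V + q • W) + (0:ℝ) • Z := by rw [hU1c]; module
  have hU2s : U₂ = (0:ℝ) • B + (q • V + (0:ℝ) • W) + (r2 * q) • Z := by rw [hU2c]; module
  have hJcombo : ∀ p r : ℝ, J (p • V + r • W) = (-r) • V + p • W := by
    intro p r; simp only [map_add, map_smul, hJV, hJW]; module
  have hVWinner : ∀ p r p' r' : ℝ, ⟪p • V + r • W, p' • V + r' • W⟫ = p * p' + r * r' := by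
    intro p r p' r'
    have := chen_inner_combo honb 0 p r 0 0 p' r' 0
    simpa using this
  -- nabla values
  have e11 : nabla U₁ U₁ = (s * (1/6)) • B + (0:ℝ) • V + (-(s * r2 / 6)) • W + (0:ℝ) • Z := by
    conv_lhs => rw [hU1s]
    rw [hnabla]
    simp only [hJcombo, hVWinner]
    match_scalars
    · first | ring1 | (ring_nf; simp only [hq2, hr22, hs2]; try ring1; try norm_num)
    · ring
    · first | ring1 | (ring_nf; simp only [hq2, hr22, hs2]; try ring1; try norm_num)
    · ring
  have e12 : nabla U₁ U₂ = (0:ℝ) • B + (s * r2 / 6) • V + (0:ℝ) • W + (-(s * (1/6))) • Z := by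
    conv_lhs => rw [hU1s, hU2s]
    rw [hnabla]
    simp only [hJcombo, hVWinner]
    match_scalars
    · ring
    · first | ring1 | (ring_nf; simp only [hq2, hr22, hs2]; try ring1; try norm_num)
    · ring
    · first | ring1 | (ring_nf; simp only [hq2, hr22, hs2]; try ring1; try norm_num)
  have e22 : nabla U₂ U₂ = (s * (5/6)) • B + (0:ℝ) • V + (-(s * r2 / 3)) • W + (0:ℝ) • Z := by
    conv_lhs => rw [hU2s]
    rw [hnabla]
    simp only [hJcombo, hVWinner]
    match_scalars
    · first | ring1 | (ring_nf; simp only [hq2, hr22, hs2]; try ring1; try norm_num)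
    · ring
    · first | ring1 | (ring_nf; simp only [hq2, hr22, hs2]; try ring1; try norm_num)
    · ring
  -- second fundamental form values
  have o11 : II U₁ U₁ = nabla U₁ U₁ := by
    rw [hII]
    refine Submodule.starProjection_eq_self_iff.mpr (chen_mem_orth_pair ?_ ?_)
    · rw [e11, hU1c, chen_inner_combo honb]; ring
    · rw [e11, hU2c, chen_inner_combo honb]; ring
  have o12 : II U₁ U₂ = nabla U₁ U₂ := by
    rw [hII]
    refine Submodule.starProjection_eq_self_iff.mpr (chen_mem_orth_pair ?_ ?_)
    · rw [e12, hU1c, chen_inner_combo honb]; ring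
    · rw [e12, hU2c, chen_inner_combo honb]; ring
  have hsplit : nabla U₂ U₂ = (s * r2 * q / 2) • U₁
      + ((s * (1/2)) • B + (0:ℝ) • V + (-(s * r2 / 2)) • W + (0:ℝ) • Z) := by
    rw [e22, hU1c]
    match_scalars
    · first | ring1 | (ring_nf; simp only [hq2, hr22, hs2]; try ring1; try norm_num)
    · ring
    · first | ring1 | (ring_nf; simp only [hq2, hr22, hs2]; try ring1; try norm_num)
    · ring
  have o22 : II U₂ U₂ = (s * (1/2)) • B + (0:ℝ) • V + (-(s * r2 / 2)) • W + (0:ℝ) • Z := by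
    rw [hII, hsplit, map_add]
    have hp0 : Submodule.orthogonalProjection (Submodule.span ℝ ({U₁, U₂} : Set E))ᗮ
        ((s * r2 * q / 2) • U₁) = 0 := by
      apply Submodule.orthogonalProjectionOnto_apply_of_mem_orthogonal
      exact Submodule.le_orthogonal_orthogonal _
        (Submodule.smul_mem _ _ (Submodule.subset_span (by simp)))
    have hw : (Submodule.orthogonalProjection (Submodule.span ℝ ({U₁, U₂} : Set E))ᗮ
        ((s * (1/2)) • B + (0:ℝ) • V + (-(s * r2 / 2)) • W + (0:ℝ) • Z) : E)
        = (s * (1/2)) • B + (0:ℝ) • V + (-(s * r2 / 2)) • W + (0:ℝ) • Z := by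
      refine Submodule.starProjection_eq_self_iff.mpr (chen_mem_orth_pair ?_ ?_)
      · rw [hU1c, chen_inner_combo honb]; ring
      · rw [hU2c, chen_inner_combo honb]; ring
    rw [Submodule.coe_add, hp0, hw]
    simp
  -- finish
  have f1 : ⟪II U₁ U₁, II U₂ U₂⟫ = -c / 4 := by
    rw [o11, e11, o22, chen_inner_combo honb]
    first | ring1 | (ring_nf; simp only [hq2, hr22, hs2]; try ring1; try norm_num)
  have f2 : ⟪II U₁ U₂, II U₁ U₂⟫ = -c / 12 := by
    rw [o12, e12, chen_inner_combo honb]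
    first | ring1 | (ring_nf; simp only [hq2, hr22, hs2]; try ring1; try norm_num)
  rw [hK, hR, f1, f2]
  ring
end

section
/- Let c, λ₁, λ₂, b₁, b₂, μ, k, x be real numbers with c ≠ 0, λ₁ ≠ λ₂, b₁ ≠ 0, b₂ ≠ 0, and suppose that c·x + 2λ₁² - 8λ₁λ₂ + 6λ₂² ≠ 0 and c·x + 6λ₁² - 8λ₁λ₂ + 2λ₂² ≠ 0. Assume the following three equations hold: (i) μ² = k - c²x²/(16(λ₁-λ₂)²); (ii) 0 = b₂·( c²x² + 4c·x·λ₁(λ₁-λ₂) - 32k(λ₁-λ₂)² ) + 4b₁(λ₁-λ₂)·( c·x + 2λ₁² - 8λ₁λ₂ + 6λ₂² )·μ; (iii) 0 = b₁·( -c²x² + 4c·x·λ₂(λ₁-λ₂) + 32k(λ₁-λ₂)² ) + 4b₂(λ₁-λ₂)·( c·x + 6λ₁² - 8λ₁λ₂ + 2λ₂² )·μ. Then x satisfies the cubic equation -c³x³ - 3c²x²·( 4k + (λ₁-λ₂)² ) + 16k(λ₁-λ₂)²·( 16k + 3λ₁² - 10λ₁λ₂ + 3λ₂² ) = 0. -/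
/-- The algebraic step in the proof of Theorem B: for a
Terng-isoparametric surface of a 2-dimensional complex space form whose normal bundle is
neither complex nor totally real, the quantities `λ₁ ≠ λ₂` (constant principal
curvatures), `μ`, `b₁ ≠ 0`, `b₂ ≠ 0`, `k` and `x = 1 - 3a²` satisfy equations (i)–(iii);
eliminating `μ` shows that `x` satisfies the fixed cubic
`-c³x³ - 3c²x²(4k + (λ₁-λ₂)²) + 16k(λ₁-λ₂)²(16k + 3λ₁² - 10λ₁λ₂ + 3λ₂²) = 0`,
hence the Kähler angle function is locally constant. -/
theorem stmt_11 (c lam₁ lam₂ b₁ b₂ μ k x : ℝ)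
    (hc : c ≠ 0) (hlam : lam₁ ≠ lam₂) (hb₁ : b₁ ≠ 0) (hb₂ : b₂ ≠ 0)
    (hden₁ : c * x + 2 * lam₁ ^ 2 - 8 * lam₁ * lam₂ + 6 * lam₂ ^ 2 ≠ 0)
    (hden₂ : c * x + 6 * lam₁ ^ 2 - 8 * lam₁ * lam₂ + 2 * lam₂ ^ 2 ≠ 0)
    (h1 : μ ^ 2 = k - c ^ 2 * x ^ 2 / (16 * (lam₁ - lam₂) ^ 2))
    (h2 : 0 = b₂ * (c ^ 2 * x ^ 2 + 4 * c * x * lam₁ * (lam₁ - lam₂)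
          - 32 * k * (lam₁ - lam₂) ^ 2)
        + 4 * b₁ * (lam₁ - lam₂)
          * (c * x + 2 * lam₁ ^ 2 - 8 * lam₁ * lam₂ + 6 * lam₂ ^ 2) * μ)
    (h3 : 0 = b₁ * (-(c ^ 2 * x ^ 2) + 4 * c * x * lam₂ * (lam₁ - lam₂)
          + 32 * k * (lam₁ - lam₂) ^ 2)
        + 4 * b₂ * (lam₁ - lam₂)
          * (c * x + 6 * lam₁ ^ 2 - 8 * lam₁ * lam₂ + 2 * lam₂ ^ 2) * μ) :
    -(c ^ 3 * x ^ 3) - 3 * c ^ 2 * x ^ 2 * (4 * k + (lam₁ - lam₂) ^ 2)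
      + 16 * k * (lam₁ - lam₂) ^ 2
        * (16 * k + 3 * lam₁ ^ 2 - 10 * lam₁ * lam₂ + 3 * lam₂ ^ 2) = 0 := by
  have hd : (lam₁ - lam₂) ≠ 0 := sub_ne_zero.mpr hlam
  have hd2 : (lam₁ - lam₂) ^ 2 ≠ 0 := pow_ne_zero 2 hd
  -- clear the division in h1
  have h1' : 16 * (lam₁ - lam₂) ^ 2 * μ ^ 2
      = 16 * (lam₁ - lam₂) ^ 2 * k - c ^ 2 * x ^ 2 := by
    field_simp at h1
    linarith [h1]
  -- product of (ii) and (iii), cancelling b₁ b₂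
  have key : 16 * (lam₁ - lam₂) ^ 2
      * (c * x + 2 * lam₁ ^ 2 - 8 * lam₁ * lam₂ + 6 * lam₂ ^ 2)
      * (c * x + 6 * lam₁ ^ 2 - 8 * lam₁ * lam₂ + 2 * lam₂ ^ 2) * μ ^ 2
      = (c ^ 2 * x ^ 2 + 4 * c * x * lam₁ * (lam₁ - lam₂) - 32 * k * (lam₁ - lam₂) ^ 2)
        * (-(c ^ 2 * x ^ 2) + 4 * c * x * lam₂ * (lam₁ - lam₂)
          + 32 * k * (lam₁ - lam₂) ^ 2) := by
    have e2 : 4 * b₁ * (lam₁ - lam₂)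
        * (c * x + 2 * lam₁ ^ 2 - 8 * lam₁ * lam₂ + 6 * lam₂ ^ 2) * μ
        = -(b₂ * (c ^ 2 * x ^ 2 + 4 * c * x * lam₁ * (lam₁ - lam₂)
          - 32 * k * (lam₁ - lam₂) ^ 2)) := by linarith [h2]
    have e3 : 4 * b₂ * (lam₁ - lam₂)
        * (c * x + 6 * lam₁ ^ 2 - 8 * lam₁ * lam₂ + 2 * lam₂ ^ 2) * μ
        = -(b₁ * (-(c ^ 2 * x ^ 2) + 4 * c * x * lam₂ * (lam₁ - lam₂)
          + 32 * k * (lam₁ - lam₂) ^ 2)) := by linarith [h3]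
    have prod := congrArg₂ (· * ·) e2 e3
    have hb : b₁ * b₂ ≠ 0 := mul_ne_zero hb₁ hb₂
    apply mul_left_cancel₀ hb
    ring_nf
    ring_nf at prod
    linarith [prod]
  have hmain : 4 * (lam₁ - lam₂) ^ 2 *
      (-(c ^ 3 * x ^ 3) - 3 * c ^ 2 * x ^ 2 * (4 * k + (lam₁ - lam₂) ^ 2)
      + 16 * k * (lam₁ - lam₂) ^ 2
        * (16 * k + 3 * lam₁ ^ 2 - 10 * lam₁ * lam₂ + 3 * lam₂ ^ 2)) = 0 := by
    linear_combination -(c * x + 2 * lam₁ ^ 2 - 8 * lam₁ * lam₂ + 6 * lam₂ ^ 2)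
        * (c * x + 6 * lam₁ ^ 2 - 8 * lam₁ * lam₂ + 2 * lam₂ ^ 2) * h1' + key
  have h4 : (4 : ℝ) * (lam₁ - lam₂) ^ 2 ≠ 0 := by positivity
  exact (mul_eq_zero.mp hmain).resolve_left h4
end
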